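/- arXiv:2011.14363 — 8 statements merged into one kernel-verified Lean document; each statement's English description precedes it below -/
import Mathlib

section
/- Let n, k, m be positive integers with n ≥ km, and let F = {F_1, ..., F_m} be a saturated family of k-graphs on the common vertex set [n]. Then for each vertex v ∈ [n] and each i ∈ [m], either d_{F_i}(v) ≤ C(n−1,k−1) − C(n−1−k(m−1), k−1) or d_{F_i}(v) = C(n−1,k−1), where C(a,b) denotes the binomial coefficient. -/
open Finset

/-- `f(n,m,k) = max{C(n,k) - C(n-m+1,k), C(km-1,k)}`. -/
def fEMC (n m k : ℕ) : ℕ :=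
  max (Nat.choose n k - Nat.choose (n - m + 1) k) (Nat.choose (k * m - 1) k)

/-- `F` is a `k`-graph on the vertex set `[n] = {1,…,n}`. -/
def IsKGraphOn (n k : ℕ) (F : Finset (Finset ℕ)) : Prop :=
  ∀ e ∈ F, e ⊆ Finset.Icc 1 n ∧ e.card = k

/-- The family `F = (F_1,…,F_m)` admits a rainbow matching. -/
def HasRainbowMatching {m : ℕ} (F : Fin m → Finset (Finset ℕ)) : Prop :=
  ∃ e : Fin m → Finset ℕ, (∀ i, e i ∈ F i) ∧
    ∀ i j : Fin m, i ≠ j → Disjoint (e i) (e j)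

/-- Degree of a vertex `v` in the hypergraph `F`. -/
def degOf (F : Finset (Finset ℕ)) (v : ℕ) : ℕ := (F.filter (fun e => v ∈ e)).card

/-- The family `F` of `k`-graphs on `[n]` is saturated. -/
def Saturated (n k : ℕ) {m : ℕ} (F : Fin m → Finset (Finset ℕ)) : Prop :=
  ¬ HasRainbowMatching F ∧
    ∀ (i : Fin m) (e : Finset ℕ), e ⊆ Finset.Icc 1 n → e.card = k → e ∉ F i →
      HasRainbowMatching (Function.update F i (insert e (F i)))

/-- Elementwise domination order: the increasing enumeration of `e` is
pointwise at most that of `f` (this forces `e.card = f.card`). -/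
def DomLE (e f : Finset ℕ) : Prop :=
  List.Forall₂ (· ≤ ·) (e.sort (· ≤ ·)) (f.sort (· ≤ ·))

/-- `F` is a stable hypergraph on vertex set `[n]`. -/
def StableGraph (n : ℕ) (F : Finset (Finset ℕ)) : Prop :=
  ∀ e f : Finset ℕ, e ⊆ Finset.Icc 1 n → DomLE e f → f ∈ F → e ∈ F

/-- `S(n,m,k)`: all `k`-subsets of `[n]` meeting `[m-1]`. -/
def SGraph (n m k : ℕ) : Finset (Finset ℕ) :=
  ((Finset.Icc 1 n).powersetCard k).filter (fun e => (e ∩ Finset.Icc 1 (m - 1)).Nonempty)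

/-- `D(n,m,k)`: all `k`-subsets of `[km-1]`. -/
def DGraph (n m k : ℕ) : Finset (Finset ℕ) :=
  (Finset.Icc 1 (k * m - 1)).powersetCard k

/-- `H(F)`: the `(k+1)`-graph on `[n] ∪ {v_1,…,v_m}`, where `v_i` is encoded
as the natural number `n + i`, with edges `e ∪ {v_i}` for `e ∈ F_i`. -/
def HF (n : ℕ) {m : ℕ} (F : Fin m → Finset (Finset ℕ)) : Finset (Finset ℕ) :=
  Finset.univ.biUnion (fun i : Fin m => (F i).image (fun e => insert (n + i.1 + 1) e))

/-- `H_S(n,m,k) = H(F)` with every `F_i = S(n,m,k)`. -/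
def HS (n m k : ℕ) : Finset (Finset ℕ) := HF n (fun _ : Fin m => SGraph n m k)

/-- `H_D(n,m,k) = H(F)` with every `F_i = D(n,m,k)`. -/
def HD (n m k : ℕ) : Finset (Finset ℕ) := HF n (fun _ : Fin m => DGraph n m k)

/-- `H*(F)`: `H(F)` together with the edges `e ∪ {u_j}`, `e` a `k`-subset of `[n]`,
`j ∈ [r]`, `r = ⌊n/k⌋ - m`, where `u_j` is encoded as the natural number `n + m + j`. -/
def HstarF (n k : ℕ) {m : ℕ} (F : Fin m → Finset (Finset ℕ)) : Finset (Finset ℕ) :=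
  HF n F ∪ Finset.univ.biUnion (fun j : Fin (n / k - m) =>
    ((Finset.Icc 1 n).powersetCard k).image (fun e => insert (n + m + j.1 + 1) e))

/-- A set of edges is a matching if its edges are pairwise disjoint. -/
def IsMatching (M : Finset (Finset ℕ)) : Prop :=
  ∀ e ∈ M, ∀ f ∈ M, e ≠ f → Disjoint e f

/-- `H₂` is `ε`-close to `H₁` (as `u`-graphs on a vertex set of size `N`):
`|E(H₁) \ E(H₂)| ≤ ε · N^u`. -/
def IsEpsClose (ε : ℝ) (N u : ℕ) (H₁ H₂ : Finset (Finset ℕ)) : Prop :=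
  (((H₁ \ H₂).card : ℝ)) ≤ ε * (N : ℝ) ^ u

/-!
Suppose `v` has degree `d < C(n-1, k-1)` in `F i`, so some `k`-set `e ∋ v` is missing from `F i`.
By saturation `e` completes a rainbow matching; its other `m - 1` edges cover a set `U` of at most
`k(m-1)` vertices, not containing `v`, and no edge of `F i` avoids `U`, for it could replace `e`.
At least `C(n-1-k(m-1), k-1)` of the `k`-sets through `v` avoid `U`, so all of them are missing
and `d ≤ C(n-1, k-1) - C(n-1-k(m-1), k-1)`.
-/

open Function

namespace Finset

variable {α : Type*} [DecidableEq α]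

theorem card_image_insert_powersetCard {s : Finset α} {a : α} (ha : a ∉ s) (k : ℕ) :
    #((s.powersetCard k).image (insert a)) = (#s).choose k := by
  rw [card_image_of_injOn, card_powersetCard]
  exact insert_erase_invOn.2.injOn.mono fun t ht ↦ notMem_mono (mem_powersetCard.1 ht).1 ha

theorem filter_mem_powersetCard_succ {s : Finset α} {a : α} (ha : a ∈ s) (k : ℕ) :
    {t ∈ s.powersetCard (k + 1) | a ∈ t} = ((s.erase a).powersetCard k).image (insert a) := by
  ext t
  simp only [mem_filter, mem_powersetCard, mem_image]
  constructor
  · rintro ⟨⟨hts, htk⟩, hat⟩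
    exact ⟨t.erase a, ⟨erase_subset_erase a hts, by rw [card_erase_of_mem hat, htk]; rfl⟩,
      insert_erase hat⟩
  · rintro ⟨u, ⟨hus, huk⟩, rfl⟩
    have hau : a ∉ u := fun h ↦ (mem_erase.1 (hus h)).1 rfl
    exact ⟨⟨insert_subset ha (hus.trans (erase_subset a s)),
      by rw [card_insert_of_notMem hau, huk]⟩, mem_insert_self a u⟩

theorem card_filter_mem_powersetCard_succ {s : Finset α} {a : α} (ha : a ∈ s) (k : ℕ) :
    #{t ∈ s.powersetCard (k + 1) | a ∈ t} = (#s - 1).choose k := by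
  rw [filter_mem_powersetCard_succ ha, card_image_insert_powersetCard (notMem_erase a s),
    card_erase_of_mem ha]

end Finset

section Degrees

variable {n k v : ℕ} {G : Finset (Finset ℕ)}

def completeStar (n k v : ℕ) : Finset (Finset ℕ) := {e ∈ (Icc 1 n).powersetCard k | v ∈ e}

theorem card_completeStar (hv : v ∈ Icc 1 n) :
    #(completeStar n (k + 1) v) = (n - 1).choose k := by
  rw [completeStar, card_filter_mem_powersetCard_succ hv, Nat.card_Icc, Nat.add_sub_cancel]

theorem filter_mem_subset_completeStar (hG : IsKGraphOn n k G) :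
    {e ∈ G | v ∈ e} ⊆ completeStar n k v :=
  filter_subset_filter _ fun e he ↦ mem_powersetCard.2 (hG e he)

theorem degOf_eq_choose_iff (hG : IsKGraphOn n (k + 1) G) (hv : v ∈ Icc 1 n) :
    degOf G v = (n - 1).choose k ↔ completeStar n (k + 1) v ⊆ G := by
  have hsub := filter_mem_subset_completeStar (v := v) hG
  rw [degOf, ← card_completeStar hv]
  constructor
  · intro h e he
    exact (mem_filter.1 ((eq_of_subset_of_card_le hsub h.ge) ▸ he)).1
  · intro h
    exact congrArg card (hsub.antisymm fun e he ↦ mem_filter.2 ⟨h he, (mem_filter.1 he).2⟩)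

theorem exists_mem_disjoint_of_choose_sub_lt_degOf {U : Finset ℕ} (hG : IsKGraphOn n (k + 1) G)
    (hv : v ∈ Icc 1 n) (hvU : v ∉ U)
    (hdeg : (n - 1).choose k - (n - 1 - #U).choose k < degOf G v) :
    ∃ f ∈ G, Disjoint f U := by
  by_contra! hGU
  set A := ((Icc 1 n \ insert v U).powersetCard k).image (insert v)
  have hA : A ⊆ completeStar n (k + 1) v \ {e ∈ G | v ∈ e} := by
    intro f hf
    obtain ⟨t, ht, rfl⟩ := mem_image.1 hf
    have htU : Disjoint t U := disjoint_of_subset_left (mem_powersetCard.1 ht).1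
      (sdiff_disjoint.mono_right (subset_insert v U))
    refine mem_sdiff.2
      ⟨?_, fun hfG ↦ hGU _ (mem_filter.1 hfG).1 (disjoint_insert_left.2 ⟨hvU, htU⟩)⟩
    rw [completeStar, filter_mem_powersetCard_succ hv]
    refine image_subset_image (powersetCard_mono ?_) hf
    rw [sdiff_insert]
    exact erase_subset_erase v sdiff_subset
  have hcardA : (n - 1 - #U).choose k ≤ #A := by
    rw [card_image_insert_powersetCard (by simp)]
    refine Nat.choose_le_choose k ?_
    have := le_card_sdiff (insert v U) (Icc 1 n)
    have := card_insert_le v U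
    rw [Nat.card_Icc] at *
    omega
  have hsub := filter_mem_subset_completeStar (v := v) hG
  have hdegle := card_le_card hsub
  have hAle := card_le_card hA
  rw [card_sdiff_of_subset hsub] at hAle
  rw [card_completeStar hv] at hAle hdegle
  rw [degOf] at hdeg
  omega

end Degrees

theorem hasRainbowMatching_of_disjoint_biUnion {m : ℕ} {F : Fin m → Finset (Finset ℕ)}
    {g : Fin m → Finset ℕ} {i : Fin m} (hg : ∀ j ≠ i, g j ∈ F j)
    (hdisj : Pairwise (Disjoint on g)) {f : Finset ℕ} (hf : f ∈ F i)
    (hfU : Disjoint f ((univ.erase i).biUnion g)) :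
    HasRainbowMatching F := by
  rw [disjoint_biUnion_right] at hfU
  have hfg : ∀ j ≠ i, Disjoint f (g j) := fun j hj ↦ hfU j (mem_erase.2 ⟨hj, mem_univ j⟩)
  refine ⟨update g i f, fun j ↦ ?_, fun a b hab ↦ ?_⟩
  · rcases eq_or_ne j i with rfl | hj
    · simpa using hf
    · simpa [hj] using hg j hj
  · rcases eq_or_ne a i with ha | ha <;> rcases eq_or_ne b i with hb | hb
    · exact absurd (ha.trans hb.symm) hab
    · subst ha; simpa [hb] using hfg b hb
    · subst hb; simpa [ha] using (hfg a ha).symm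
    · simpa [ha, hb] using hdisj hab

theorem Saturated.exists_blocking_set {n k m : ℕ} {F : Fin m → Finset (Finset ℕ)}
    (hF : ∀ i, IsKGraphOn n k (F i)) (hsat : Saturated n k F) {i : Fin m} {e : Finset ℕ}
    (he : e ⊆ Icc 1 n) (hek : #e = k) (heF : e ∉ F i) :
    ∃ U : Finset ℕ, #U ≤ k * (m - 1) ∧ Disjoint e U ∧ ∀ f ∈ F i, ¬Disjoint f U := by
  obtain ⟨g, hg, hdisj⟩ := hsat.2 i e he hek heF
  have hgF : ∀ j ≠ i, g j ∈ F j := fun j hj ↦ by simpa [hj] using hg j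
  have hFU : ∀ f ∈ F i, ¬Disjoint f ((univ.erase i).biUnion g) := fun f hf hfU ↦
    hsat.1 (hasRainbowMatching_of_disjoint_biUnion hgF hdisj hf hfU)
  refine ⟨(univ.erase i).biUnion g, ?_, ?_, hFU⟩
  · refine (card_biUnion_le_card_mul _ _ k fun j hj ↦ ?_).trans_eq ?_
    · exact ((hF j) _ (hgF j (ne_of_mem_erase hj))).2.le
    · rw [card_erase_of_mem (mem_univ i), card_univ, Fintype.card_fin, mul_comm]
  · have hgU : Disjoint (g i) ((univ.erase i).biUnion g) :=
      (disjoint_biUnion_right _ _ _).2 fun j hj ↦ hdisj _ _ (ne_of_mem_erase hj).symm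
    have hgi := hg i
    rw [update_self, mem_insert] at hgi
    obtain hgi | hgi := hgi
    · exact hgi ▸ hgU
    · exact absurd hgU (hFU _ hgi)

theorem degree_in_saturated_family_general (n k m : ℕ) (hk : 0 < k)
    (F : Fin m → Finset (Finset ℕ)) (hF : ∀ i, IsKGraphOn n k (F i))
    (hsat : Saturated n k F) :
    ∀ v ∈ Finset.Icc 1 n, ∀ i : Fin m,
      degOf (F i) v ≤ Nat.choose (n - 1) (k - 1) - Nat.choose (n - 1 - k * (m - 1)) (k - 1) ∨
      degOf (F i) v = Nat.choose (n - 1) (k - 1) := by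
  intro v hv i
  obtain ⟨k, rfl⟩ : ∃ k', k = k' + 1 := ⟨k - 1, by omega⟩
  rw [Nat.add_sub_cancel]
  by_contra! h
  obtain ⟨e, he, heF⟩ := not_subset.1 ((degOf_eq_choose_iff (hF i) hv).not.1 h.2)
  obtain ⟨⟨heS, hek⟩, hve⟩ := mem_filter.1 he |>.imp_left mem_powersetCard.1
  obtain ⟨U, hU, heU, hFU⟩ := hsat.exists_blocking_set hF heS hek heF
  obtain ⟨f, hf, hfU⟩ := exists_mem_disjoint_of_choose_sub_lt_degOf (hF i) hv
    (disjoint_left.1 heU hve)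
    (h.1.trans_le' (Nat.sub_le_sub_left (Nat.choose_le_choose k (by omega)) _))
  exact hFU f hf hfU

/-- degrees in a saturated family. -/
theorem degree_in_saturated_family (n k m : ℕ) (hk : 0 < k) (hm : 0 < m)
    (hn : n ≥ k * m)
    (F : Fin m → Finset (Finset ℕ)) (hF : ∀ i, IsKGraphOn n k (F i))
    (hsat : Saturated n k F) :
    ∀ v ∈ Finset.Icc 1 n, ∀ i : Fin m,
      degOf (F i) v ≤ Nat.choose (n - 1) (k - 1) - Nat.choose (n - 1 - k * (m - 1)) (k - 1) ∨
      degOf (F i) v = Nat.choose (n - 1) (k - 1) :=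
  degree_in_saturated_family_general n k m hk F hF hsat
end

section
/- Let n, k, m be positive integers with n ≥ km. If the family {F_1, ..., F_m} of k-graphs on the common vertex set [n] does not admit a rainbow matching, then there exists a stable family {F_1', ..., F_m'} of k-graphs on the vertex set [n] with |F_i| = |F_i'| for all i ∈ [m] that also does not admit a rainbow matching. -/
open Finset

/-!
Apply left shifts `v ↦ u` (`u < v`) to all the `F i` simultaneously, as long as one of them
changes. A shift preserves sizes and `k`-uniformity, and it cannot create a rainbow matching:
exchanging `u` and `v` in every edge of a rainbow matching of the shifted family gives one of the
original family. Each nontrivial shift lowers the total vertex sum, so the process stops at a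
family invariant under all shifts. Such a family is stable: if `e ≤ f`, then replacing the least
element of `f \ e` by the least element of `e \ f` gives `f'` with `e ≤ f' ≤ f`, and
`|f' \ e| < |f \ e|`. Domination `e ≤ f` is used in its counting form
`|{x ∈ f | x < t}| ≤ |{x ∈ e | x < t}|` for all `t`, which survives this replacement.
-/

open UV FinsetFamily

section Swap

variable {α : Type*} [DecidableEq α] {u v : α} {a : Finset α}

theorem Finset.map_swap_of_notMem_of_notMem (hu : u ∉ a) (hv : v ∉ a) :
    a.map (Equiv.swap u v).toEmbedding = a := by
  ext x
  simp only [mem_map_equiv, Equiv.symm_swap]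
  by_cases hxu : x = u
  · subst hxu; simp [hu, hv]
  by_cases hxv : x = v
  · subst hxv; simp [hu, hv]
  rw [Equiv.swap_apply_of_ne_of_ne hxu hxv]

theorem Finset.map_swap_of_notMem_of_mem (hu : u ∉ a) (hv : v ∈ a) :
    a.map (Equiv.swap u v).toEmbedding = (a ∪ {u}) \ {v} := by
  ext x
  simp only [mem_map_equiv, Equiv.symm_swap, mem_sdiff, mem_union, mem_singleton]
  by_cases hxu : x = u
  · subst hxu; simp [hv, show x ≠ v by rintro rfl; exact hu hv]
  by_cases hxv : x = v
  · subst hxv; simp [hu]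
  rw [Equiv.swap_apply_of_ne_of_ne hxu hxv]
  tauto

end Swap

theorem HasRainbowMatching.of_compression {m u v : ℕ} {F : Fin m → Finset (Finset ℕ)}
    (h : HasRainbowMatching fun i => 𝓒 {u} {v} (F i)) : HasRainbowMatching F := by
  obtain ⟨e, he, hdisj⟩ := h
  by_cases hall : ∀ i, e i ∈ F i
  · exact ⟨e, hall, hdisj⟩
  simp only [not_forall] at hall
  obtain ⟨i₀, hi₀⟩ := hall
  have hu₀ : u ∈ e i₀ := singleton_subset_iff.1 (le_of_mem_compression_of_notMem (he i₀) hi₀)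
  have hv₀ : v ∉ e i₀ :=
    disjoint_singleton_left.1 (disjoint_of_mem_compression_of_notMem (he i₀) hi₀)
  have hu : ∀ i ≠ i₀, u ∉ e i := fun i hi => disjoint_left.1 (hdisj i₀ i hi.symm) hu₀
  -- Exchanging `u` and `v` undoes the compression of `e i₀` and performs it on the edge through `v`.
  refine ⟨fun i => (e i).map (Equiv.swap u v).toEmbedding, fun i => ?_,
    fun i j hij => disjoint_map _ |>.2 (hdisj i j hij)⟩
  dsimp only at he ⊢
  by_cases hi : i = i₀
  · subst hi
    rw [Equiv.swap_comm, map_swap_of_notMem_of_mem hv₀ hu₀]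
    exact sup_sdiff_mem_of_mem_compression_of_notMem (he i) hi₀
  by_cases hv : v ∈ e i
  · rw [map_swap_of_notMem_of_mem (hu i hi) hv]
    exact sup_sdiff_mem_of_mem_compression (he i) (singleton_subset_iff.2 hv)
      (disjoint_singleton_left.2 (hu i hi))
  · rw [map_swap_of_notMem_of_notMem (hu i hi) hv]
    by_contra hei
    exact hu i hi (singleton_subset_iff.1 (le_of_mem_compression_of_notMem (he i) hei))

theorem List.Forall₂.countP_le {α β : Type*} {R : α → β → Prop} {p : α → Bool} {q : β → Bool}
    {l₁ : List α} {l₂ : List β} (h : List.Forall₂ R l₁ l₂) (hpq : ∀ ⦃a b⦄, R a b → q b → p a) :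
    l₂.countP q ≤ l₁.countP p := by
  induction h with
  | nil => rfl
  | @cons a b l₁ l₂ hab _ ih =>
    simp only [List.countP_cons]
    have := @hpq a b hab
    split_ifs <;> grind

theorem DomLE.card_eq {e f : Finset ℕ} (h : DomLE e f) : #e = #f := by
  simpa using h.length_eq

theorem DomLE.card_filter_lt_le {e f : Finset ℕ} (h : DomLE e f) (t : ℕ) :
    #{x ∈ f | x < t} ≤ #{x ∈ e | x < t} := by
  have hcount (s : Finset ℕ) : #{x ∈ s | x < t} = (s.sort (· ≤ ·)).countP (· < t) := by
    simpa using (sort_nodup s (· ≤ ·)).card_eq_countP (P := (· < t))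
  rw [hcount, hcount]
  exact List.Forall₂.countP_le h fun a b hab hb => by simp at hb ⊢; omega

theorem exists_shift_of_card_filter_lt_le {e f : Finset ℕ} (hne : e ≠ f) (hcard : #e = #f)
    (hcount : ∀ t, #{x ∈ f | x < t} ≤ #{x ∈ e | x < t}) :
    ∃ u ∈ e, ∃ v ∈ f, u < v ∧ u ∉ f ∧ v ∉ e ∧
      ∀ t, #{x ∈ insert u (f.erase v) | x < t} ≤ #{x ∈ e | x < t} := by
  have hef : (e \ f).Nonempty :=
    sdiff_nonempty.2 fun h => hne (eq_of_subset_of_card_le h hcard.ge)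
  have hfe : (f \ e).Nonempty :=
    sdiff_nonempty.2 fun h => hne (eq_of_subset_of_card_le h hcard.le).symm
  -- `u` and `v` are the first places where the increasing enumerations of `e` and `f` differ.
  set u := (e \ f).min' hef
  set v := (f \ e).min' hfe
  obtain ⟨hue, huf⟩ : u ∈ e ∧ u ∉ f := mem_sdiff.1 (min'_mem _ hef)
  obtain ⟨hvf, hve⟩ : v ∈ f ∧ v ∉ e := mem_sdiff.1 (min'_mem _ hfe)
  have below_u : ∀ x ∈ e, x < u → x ∈ f := fun x hx hxu => by
    by_contra hxf
    exact (min'_le _ x (mem_sdiff.2 ⟨hx, hxf⟩)).not_gt hxu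
  have below_v : ∀ x ∈ f, x < v → x ∈ e := fun x hx hxv => by
    by_contra hxe
    exact (min'_le _ x (mem_sdiff.2 ⟨hx, hxe⟩)).not_gt hxv
  have huv : u < v := by
    by_contra! hvu
    have hsub : {x ∈ e | x < v + 1} ⊆ {x ∈ f | x < v + 1}.erase v := by
      intro x hx
      simp only [mem_filter, mem_erase] at hx ⊢
      have hxv : x ≠ v := fun h => hve (h ▸ hx.1)
      exact ⟨hxv, below_u x hx.1 (by omega), hx.2⟩
    have hle := card_le_card hsub
    rw [card_erase_of_mem (mem_filter.2 ⟨hvf, by omega⟩)] at hle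
    have hpos : 0 < #{x ∈ f | x < v + 1} := card_pos.2 ⟨v, mem_filter.2 ⟨hvf, by omega⟩⟩
    have := hcount (v + 1)
    omega
  refine ⟨u, hue, v, hvf, huv, huf, hve, fun t => ?_⟩
  rcases le_or_gt t v with htv | hvt
  · refine card_le_card fun x hx => ?_
    simp only [mem_filter, mem_insert, mem_erase] at hx ⊢
    obtain ⟨rfl | ⟨hxv, hxf⟩, hxt⟩ := hx
    · exact ⟨hue, hxt⟩
    · exact ⟨below_v x hxf (by omega), hxt⟩
  · calc #{x ∈ insert u (f.erase v) | x < t} = #{x ∈ f | x < t} := by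
          have hv : v ∈ {x ∈ f | x < t} := mem_filter.2 ⟨hvf, hvt⟩
          rw [filter_insert, if_pos (by omega), filter_erase,
            card_insert_of_notMem fun h => huf (mem_filter.1 (mem_of_mem_erase h)).1,
            card_erase_of_mem hv, Nat.sub_add_cancel (card_pos.2 ⟨v, hv⟩)]
      _ ≤ #{x ∈ e | x < t} := hcount t

section Compress

variable {α : Type*} [DecidableEq α] {u v : α} {a : Finset α}

theorem UV.compress_singleton_of_notMem_of_mem (hu : u ∉ a) (hv : v ∈ a) :
    compress {u} {v} a = insert u (a.erase v) := by
  have huv : u ≠ v := fun h => hu (h ▸ hv)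
  rw [compress_of_disjoint_of_le (disjoint_singleton_left.2 hu) (singleton_subset_iff.2 hv),
    sup_eq_union, union_singleton, sdiff_singleton_eq_erase, erase_insert_of_ne huv]

theorem UV.insert_erase_mem_of_isCompressed {G : Finset (Finset α)}
    (hG : IsCompressed {u} {v} G) (ha : a ∈ G) (hu : u ∉ a) (hv : v ∈ a) :
    insert u (a.erase v) ∈ G := by
  rw [← compress_singleton_of_notMem_of_mem hu hv, ← hG.eq]
  exact compress_mem_compression ha

end Compress

def IsShifted (n : ℕ) (G : Finset (Finset ℕ)) : Prop :=
  ∀ u v, 1 ≤ u → u < v → v ≤ n → IsCompressed {u} {v} G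

theorem IsShifted.mem_of_card_filter_lt_le {n : ℕ} {G : Finset (Finset ℕ)} (hG : IsShifted n G)
    (hGn : ∀ f ∈ G, f ⊆ Icc 1 n) {e f : Finset ℕ} (he : e ⊆ Icc 1 n) (hf : f ∈ G)
    (hcard : #e = #f) (hcount : ∀ t, #{x ∈ f | x < t} ≤ #{x ∈ e | x < t}) : e ∈ G := by
  induction hd : #(f \ e) generalizing f with
  | zero =>
    rw [card_eq_zero, sdiff_eq_empty_iff_subset] at hd
    rwa [← eq_of_subset_of_card_le hd hcard.le]
  | succ d ih =>
    have hne : e ≠ f := by rintro rfl; simp at hd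
    obtain ⟨u, hue, v, hvf, huv, huf, hve, hcount'⟩ :=
      exists_shift_of_card_filter_lt_le hne hcard hcount
    have hu : 1 ≤ u := (mem_Icc.1 (he hue)).1
    have hv : v ≤ n := (mem_Icc.1 (hGn f hf hvf)).2
    refine ih (insert_erase_mem_of_isCompressed (hG u v hu huv hv) hf huf hvf) ?_ hcount' ?_
    · rw [card_insert_of_notMem fun h => huf (mem_of_mem_erase h), card_erase_of_mem hvf,
        hcard, Nat.sub_add_cancel (card_pos.2 ⟨v, hvf⟩)]
    · rw [insert_sdiff_of_mem _ hue, erase_sdiff_comm, card_erase_of_mem (mem_sdiff.2 ⟨hvf, hve⟩),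
        hd, Nat.add_sub_cancel]

theorem IsShifted.stableGraph {n : ℕ} {G : Finset (Finset ℕ)} (hG : IsShifted n G)
    (hGn : ∀ f ∈ G, f ⊆ Icc 1 n) : StableGraph n G :=
  fun _ _ he hef hf => hG.mem_of_card_filter_lt_le hGn he hf hef.card_eq hef.card_filter_lt_le

def weight (G : Finset (Finset ℕ)) : ℕ := ∑ a ∈ G, ∑ x ∈ a, x

theorem UV.sum_compress_singleton_lt {u v : ℕ} (huv : u < v) {a : Finset ℕ}
    (h : compress {u} {v} a ≠ a) : ∑ x ∈ compress {u} {v} a, x < ∑ x ∈ a, x := by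
  have hua : u ∉ a ∧ v ∈ a := by
    by_contra hc
    refine h (if_neg ?_)
    simpa only [disjoint_singleton_left, singleton_subset_iff] using hc
  rw [compress_singleton_of_notMem_of_mem hua.1 hua.2,
    sum_insert fun hu => hua.1 (mem_of_mem_erase hu), ← add_sum_erase a (fun x => x) hua.2]
  exact Nat.add_lt_add_right huv _

theorem UV.weight_compression_lt {u v : ℕ} (huv : u < v) {G : Finset (Finset ℕ)}
    (h : 𝓒 {u} {v} G ≠ G) : weight (𝓒 {u} {v} G) < weight G := by
  have hmoved : ({a ∈ G | compress {u} {v} a ∉ G}).Nonempty := by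
    contrapose! h
    have hsplit := filter_union_filter_not_eq (compress {u} {v} · ∈ G) G
    rw [h, union_empty] at hsplit
    rwa [compression, filter_image, h, image_empty, union_empty]
  rw [weight, weight, compression, sum_union compress_disjoint]
  conv_rhs => rw [← filter_union_filter_not_eq (compress {u} {v} · ∈ G) G]
  rw [sum_union (disjoint_filter_filter_not _ _ _), add_lt_add_iff_left, filter_image,
    sum_image compress_injOn]
  refine sum_lt_sum_of_nonempty hmoved fun a ha => sum_compress_singleton_lt huv fun h => ?_
  rw [mem_filter, h] at ha
  exact ha.2 ha.1

theorem UV.weight_compression_le {u v : ℕ} (huv : u ≤ v) (G : Finset (Finset ℕ)) :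
    weight (𝓒 {u} {v} G) ≤ weight G := by
  by_cases h : 𝓒 {u} {v} G = G
  · rw [h]
  · rcases huv.lt_or_eq with huv | rfl
    · exact (weight_compression_lt huv h).le
    · exact absurd (compression_self _ _) h

theorem IsKGraphOn.compression {n k u v : ℕ} {G : Finset (Finset ℕ)} (hG : IsKGraphOn n k G)
    (hu : u ∈ Icc 1 n) : IsKGraphOn n k (𝓒 {u} {v} G) := by
  intro a ha
  rcases mem_compression.1 ha with ⟨haG, -⟩ | ⟨-, b, hb, rfl⟩
  · exact hG a haG
  obtain ⟨hbn, hbk⟩ := hG b hb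
  refine ⟨?_, (card_compress (by simp) b).trans hbk⟩
  unfold compress
  split_ifs
  · exact sdiff_subset.trans (union_subset hbn (singleton_subset_iff.2 hu))
  · exact hbn

theorem exists_isShifted_family {n k m : ℕ} (F : Fin m → Finset (Finset ℕ))
    (hF : ∀ i, IsKGraphOn n k (F i)) (hno : ¬ HasRainbowMatching F) :
    ∃ F' : Fin m → Finset (Finset ℕ), (∀ i, IsKGraphOn n k (F' i)) ∧
      (∀ i, IsShifted n (F' i)) ∧ (∀ i, #(F' i) = #(F i)) ∧ ¬ HasRainbowMatching F' := by
  by_cases hsh : ∀ i, IsShifted n (F i)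
  · exact ⟨F, hF, hsh, fun _ => rfl, hno⟩
  simp only [IsShifted, not_forall] at hsh
  obtain ⟨i₀, u, v, hu, huv, hvn, hne⟩ := hsh
  have hweight : ∑ i, weight (𝓒 {u} {v} (F i)) < ∑ i, weight (F i) :=
    sum_lt_sum (fun i _ => weight_compression_le huv.le (F i))
      ⟨i₀, mem_univ _, weight_compression_lt huv hne⟩
  obtain ⟨F', hF'k, hF'sh, hF'card, hF'no⟩ := exists_isShifted_family (fun i => 𝓒 {u} {v} (F i))
    (fun i => (hF i).compression (mem_Icc.2 ⟨hu, by omega⟩)) (fun h => hno h.of_compression)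
  exact ⟨F', hF'k, hF'sh, fun i => (hF'card i).trans (card_compression _ _ _), hF'no⟩
termination_by ∑ i, weight (F i)

theorem exists_stable_family_general (n k m : ℕ)
    (F : Fin m → Finset (Finset ℕ)) (hF : ∀ i, IsKGraphOn n k (F i))
    (hno : ¬ HasRainbowMatching F) :
    ∃ F' : Fin m → Finset (Finset ℕ), (∀ i, IsKGraphOn n k (F' i)) ∧
      (∀ i, StableGraph n (F' i)) ∧ (∀ i, (F' i).card = (F i).card) ∧
      ¬ HasRainbowMatching F' := by
  obtain ⟨F', hk, hsh, hcard, hno'⟩ := exists_isShifted_family F hF hno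
  exact ⟨F', hk, fun i => (hsh i).stableGraph fun f hf => (hk i f hf).1, hcard, hno'⟩

/-- one can pass to a stable family with the same sizes and
still no rainbow matching. -/
theorem exists_stable_family (n k m : ℕ) (hk : 0 < k) (hm : 0 < m) (hn : n ≥ k * m)
    (F : Fin m → Finset (Finset ℕ)) (hF : ∀ i, IsKGraphOn n k (F i))
    (hno : ¬ HasRainbowMatching F) :
    ∃ F' : Fin m → Finset (Finset ℕ), (∀ i, IsKGraphOn n k (F' i)) ∧
      (∀ i, StableGraph n (F' i)) ∧ (∀ i, (F' i).card = (F i).card) ∧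
      ¬ HasRainbowMatching F' :=
  exists_stable_family_general n k m F hF hno
end

section
/- Let n, k, m be positive integers with n ≥ km, and let F = {F_1, ..., F_m} be a family of k-graphs on the common vertex set [n] that does not admit a rainbow matching. Then there exists a family F' = {F_1', ..., F_m'} of k-graphs on the vertex set [n] such that F' is both stable and saturated and |F_i'| ≥ |F_i| for every i ∈ [m]. -/
open Finset

/-- the shifted edge -/
def shiftE (u v : ℕ) (f : Finset ℕ) : Finset ℕ := insert u (f.erase v)

/-- the (u,v)-compression of a hypergraph -/
def compG (u v : ℕ) (G : Finset (Finset ℕ)) : Finset (Finset ℕ) :=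
  G.filter (fun f => ¬ (v ∈ f ∧ u ∉ f ∧ shiftE u v f ∉ G)) ∪
    (G.filter (fun f => v ∈ f ∧ u ∉ f ∧ shiftE u v f ∉ G)).image (shiftE u v)

lemma shiftE_inv {u v : ℕ} {f : Finset ℕ} (huv : u ≠ v) (hv : v ∈ f) (hu : u ∉ f) :
    insert v ((shiftE u v f).erase u) = f := by
  unfold shiftE
  rw [Finset.erase_insert (by simp [hu])]
  exact Finset.insert_erase hv

lemma mem_shiftE_left {u v : ℕ} {f : Finset ℕ} : u ∈ shiftE u v f := Finset.mem_insert_self _ _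

lemma not_mem_shiftE {u v : ℕ} {f : Finset ℕ} (huv : u ≠ v) : v ∉ shiftE u v f := by
  simp [shiftE, huv.symm, Finset.mem_erase]

lemma mem_compG {u v : ℕ} {G : Finset (Finset ℕ)} {g : Finset ℕ} :
    g ∈ compG u v G ↔
      (g ∈ G ∧ ¬ (v ∈ g ∧ u ∉ g ∧ shiftE u v g ∉ G)) ∨
      (∃ f ∈ G, (v ∈ f ∧ u ∉ f ∧ shiftE u v f ∉ G) ∧ g = shiftE u v f) := by
  simp only [compG, Finset.mem_union, Finset.mem_filter, Finset.mem_image]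
  constructor
  · rintro (h | ⟨f, ⟨hf, hm⟩, rfl⟩)
    · exact Or.inl h
    · exact Or.inr ⟨f, hf, hm, rfl⟩
  · rintro (h | ⟨f, hf, hm, rfl⟩)
    · exact Or.inl h
    · exact Or.inr ⟨f, ⟨hf, hm⟩, rfl⟩

lemma compG_card {u v : ℕ} (huv : u ≠ v) (G : Finset (Finset ℕ)) :
    (compG u v G).card = G.card := by
  rw [compG, Finset.card_union_of_disjoint, Finset.card_image_of_injOn]
  · rw [← Finset.card_filter_add_card_filter_not (p := fun f => (v ∈ f ∧ u ∉ f ∧ shiftE u v f ∉ G)) (s := G)]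
    omega
  · intro a ha b hb hab
    simp only [Finset.mem_coe, Finset.mem_filter] at ha hb
    rw [← shiftE_inv huv ha.2.1 ha.2.2.1, ← shiftE_inv huv hb.2.1 hb.2.2.1, hab]
  · rw [Finset.disjoint_right]
    rintro g hg
    simp only [Finset.mem_image, Finset.mem_filter] at hg
    obtain ⟨f, ⟨hf, hm⟩, rfl⟩ := hg
    simp only [Finset.mem_filter, not_and]
    intro hG
    exact absurd hG hm.2.2


lemma hrm_compG {u v : ℕ} (huv : u ≠ v) {m : ℕ} {G : Fin m → Finset (Finset ℕ)}
    (h : HasRainbowMatching (fun i => compG u v (G i))) : HasRainbowMatching G := by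
  obtain ⟨e, hmem, hdisj⟩ := h
  by_cases hall : ∀ i, e i ∈ G i
  · exact ⟨e, hall, hdisj⟩
  push_neg at hall
  obtain ⟨j0, hj0⟩ := hall
  rcases mem_compG.mp (hmem j0) with ⟨hg, _⟩ | ⟨f, hfG, hmv, hef⟩
  · exact absurd hg hj0
  have hu0 : u ∈ e j0 := by rw [hef]; exact mem_shiftE_left
  have hv0 : v ∉ e j0 := by rw [hef]; exact not_mem_shiftE huv
  have hfeq : f = insert v ((e j0).erase u) := by
    rw [hef, shiftE_inv huv hmv.1 hmv.2.1]
  have hGmem : ∀ i, i ≠ j0 → e i ∈ G i := by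
    intro i hi
    rcases mem_compG.mp (hmem i) with ⟨hg, _⟩ | ⟨f', _, _, he'⟩
    · exact hg
    · exfalso
      have hui : u ∈ e i := by rw [he']; exact mem_shiftE_left
      exact Finset.disjoint_left.mp (hdisj i j0 hi) hui hu0
  have hdf : ∀ i, i ≠ j0 → v ∉ e i → Disjoint f (e i) := by
    intro i hi hvi
    rw [hfeq, Finset.disjoint_left]
    intro x hx hx'
    rcases Finset.mem_insert.mp hx with rfl | hx
    · exact hvi hx'
    · exact Finset.disjoint_left.mp (hdisj j0 i (Ne.symm hi))
        (Finset.mem_of_mem_erase hx) hx'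
  by_cases hv1 : ∃ j1, j1 ≠ j0 ∧ v ∈ e j1
  · obtain ⟨j1, hj1ne, hvj1⟩ := hv1
    have h1 : e j1 ∈ G j1 := hGmem j1 hj1ne
    have hu1 : u ∉ e j1 := fun hu1 =>
      Finset.disjoint_left.mp (hdisj j1 j0 hj1ne) hu1 hu0
    have hsh : shiftE u v (e j1) ∈ G j1 := by
      rcases mem_compG.mp (hmem j1) with ⟨_, hns⟩ | ⟨f', _, _, he'⟩
      · by_contra hc
        exact hns ⟨hvj1, hu1, hc⟩
      · exfalso
        apply hu1
        rw [he']; exact mem_shiftE_left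
    set g1 : Finset ℕ := shiftE u v (e j1) with hg1
    refine ⟨fun i => if i = j0 then f else if i = j1 then g1 else e i, ?_, ?_⟩
    · intro i
      dsimp only
      by_cases h0 : i = j0
      · subst h0; rw [if_pos rfl]; exact hfG
      by_cases h1' : i = j1
      · subst h1'; rw [if_neg h0, if_pos rfl]; exact hsh
      · simp only [if_neg h0, if_neg h1']
        exact hGmem i h0
    · have hfg1 : Disjoint f g1 := by
        rw [hfeq, hg1, shiftE, Finset.disjoint_left]
        intro x hx hx'
        rcases Finset.mem_insert.mp hx with rfl | hx
        · rcases Finset.mem_insert.mp hx' with h | h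
          · exact huv h.symm
          · exact (Finset.mem_erase.mp h).1 rfl
        · rcases Finset.mem_insert.mp hx' with rfl | h
          · exact (Finset.mem_erase.mp hx).1 rfl
          · exact Finset.disjoint_left.mp (hdisj j0 j1 (Ne.symm hj1ne))
              (Finset.mem_of_mem_erase hx) (Finset.mem_of_mem_erase h)
      have hfei : ∀ i, i ≠ j0 → i ≠ j1 → Disjoint f (e i) := by
        intro i hi0 hi1
        exact hdf i hi0 (fun hvi =>
          Finset.disjoint_left.mp (hdisj j1 i (fun hh => hi1 hh.symm)) hvj1 hvi)
      have hg1ei : ∀ i, i ≠ j0 → i ≠ j1 → Disjoint g1 (e i) := by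
        intro i hi0 hi1
        rw [hg1, shiftE, Finset.disjoint_left]
        intro x hx hx'
        rcases Finset.mem_insert.mp hx with rfl | hx
        · exact Finset.disjoint_left.mp (hdisj j0 i (Ne.symm hi0)) hu0 hx'
        · exact Finset.disjoint_left.mp (hdisj j1 i (fun hh => hi1 hh.symm))
            (Finset.mem_of_mem_erase hx) hx'
      intro i j hij
      dsimp only
      by_cases hi0 : i = j0
      · subst hi0; rw [if_pos rfl]
        by_cases hj1' : j = j1
        · subst hj1'; rw [if_neg (Ne.symm hij), if_pos rfl]; exact hfg1
        · rw [if_neg (Ne.symm hij), if_neg hj1']; exact hfei j (Ne.symm hij) hj1'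
      · rw [if_neg hi0]
        by_cases hi1 : i = j1
        · subst hi1; rw [if_pos rfl]
          by_cases hj0' : j = j0
          · subst hj0'; rw [if_pos rfl]; exact hfg1.symm
          · rw [if_neg hj0', if_neg (Ne.symm hij)]; exact hg1ei j hj0' (Ne.symm hij)
        · rw [if_neg hi1]
          by_cases hj0' : j = j0
          · subst hj0'; rw [if_pos rfl]; exact (hfei i hi0 hi1).symm
          · rw [if_neg hj0']
            by_cases hj1' : j = j1
            · subst hj1'; rw [if_pos rfl]; exact (hg1ei i hi0 hi1).symm
            · rw [if_neg hj1']; exact hdisj i j hij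
  · push_neg at hv1
    refine ⟨Function.update e j0 f, ?_, ?_⟩
    · intro i
      by_cases h0 : i = j0
      · subst h0; simpa using hfG
      · rw [Function.update_of_ne h0]
        exact hGmem i h0
    · intro i j hij
      by_cases hi0 : i = j0 <;> by_cases hj0' : j = j0
      · exact absurd (hi0.trans hj0'.symm) hij
      · subst hi0
        rw [Function.update_self, Function.update_of_ne hj0']
        exact hdf j (Ne.symm hij) (hv1 j hj0')
      · subst hj0'
        rw [Function.update_self, Function.update_of_ne hi0]
        exact (hdf i hij (hv1 i hi0)).symm
      · rw [Function.update_of_ne hi0, Function.update_of_ne hj0']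
        exact hdisj i j hij


def wE (e : Finset ℕ) : ℕ := e.sum id
def wG (G : Finset (Finset ℕ)) : ℕ := G.sum wE

lemma wE_shiftE_lt {u v : ℕ} {f : Finset ℕ} (huv : u < v) (hv : v ∈ f) (hu : u ∉ f) :
    wE (shiftE u v f) < wE f := by
  have h1 : wE f = v + wE (f.erase v) := (Finset.add_sum_erase f id hv).symm
  have h2 : wE (shiftE u v f) = u + wE (f.erase v) :=
    Finset.sum_insert (fun hc => hu (Finset.mem_of_mem_erase hc))
  omega

lemma card_shiftE {u v : ℕ} {f : Finset ℕ} (hv : v ∈ f) (hu : u ∉ f) :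
    (shiftE u v f).card = f.card := by
  rw [shiftE, Finset.card_insert_of_notMem (fun hc => hu (Finset.mem_of_mem_erase hc)),
    Finset.card_erase_of_mem hv]
  have : 0 < f.card := Finset.card_pos.mpr ⟨v, hv⟩
  omega

lemma isK_compG {n k u v : ℕ} (h1u : 1 ≤ u) (huv : u < v) {G : Finset (Finset ℕ)}
    (hG : IsKGraphOn n k G) : IsKGraphOn n k (compG u v G) := by
  intro g hg
  rcases mem_compG.mp hg with ⟨hgG, _⟩ | ⟨f, hfG, hm, rfl⟩
  · exact hG g hgG
  · obtain ⟨hsub, hcard⟩ := hG f hfG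
    constructor
    · intro x hx
      rcases Finset.mem_insert.mp hx with rfl | hx
      · have hvn : v ∈ Finset.Icc 1 n := hsub hm.1
        rw [Finset.mem_Icc] at hvn ⊢
        omega
      · exact hsub (Finset.mem_of_mem_erase hx)
    · rw [card_shiftE hm.1 hm.2.1]; exact hcard

lemma wG_compG_le {u v : ℕ} (huv : u < v) (G : Finset (Finset ℕ)) :
    wG (compG u v G) ≤ wG G := by
  classical
  have hinj : ∀ a ∈ G.filter (fun f => v ∈ f ∧ u ∉ f ∧ shiftE u v f ∉ G),
      ∀ b ∈ G.filter (fun f => v ∈ f ∧ u ∉ f ∧ shiftE u v f ∉ G),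
      shiftE u v a = shiftE u v b → a = b := by
    intro a ha b hb hab
    simp only [Finset.mem_filter] at ha hb
    rw [← shiftE_inv huv.ne ha.2.1 ha.2.2.1, ← shiftE_inv huv.ne hb.2.1 hb.2.2.1, hab]
  have hdisj : Disjoint (G.filter (fun f => ¬ (v ∈ f ∧ u ∉ f ∧ shiftE u v f ∉ G)))
      ((G.filter (fun f => v ∈ f ∧ u ∉ f ∧ shiftE u v f ∉ G)).image (shiftE u v)) := by
    rw [Finset.disjoint_right]
    rintro g hg
    simp only [Finset.mem_image, Finset.mem_filter] at hg
    obtain ⟨f, ⟨hf, hm⟩, rfl⟩ := hg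
    simp only [Finset.mem_filter, not_and]
    intro hG'
    exact absurd hG' hm.2.2
  rw [wG, compG, Finset.sum_union hdisj, Finset.sum_image hinj]
  calc (G.filter (fun f => ¬ (v ∈ f ∧ u ∉ f ∧ shiftE u v f ∉ G))).sum wE +
        (G.filter (fun f => v ∈ f ∧ u ∉ f ∧ shiftE u v f ∉ G)).sum (fun f => wE (shiftE u v f))
      ≤ (G.filter (fun f => ¬ (v ∈ f ∧ u ∉ f ∧ shiftE u v f ∉ G))).sum wE +
        (G.filter (fun f => v ∈ f ∧ u ∉ f ∧ shiftE u v f ∉ G)).sum wE := by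
        apply Nat.add_le_add_left
        apply Finset.sum_le_sum
        intro f hf
        simp only [Finset.mem_filter] at hf
        exact (wE_shiftE_lt huv hf.2.1 hf.2.2.1).le
    _ = wG G := by
        rw [add_comm, Finset.sum_filter_add_sum_filter_not]; rfl

lemma wG_compG_lt {u v : ℕ} (huv : u < v) {G : Finset (Finset ℕ)}
    (hne : (G.filter (fun f => v ∈ f ∧ u ∉ f ∧ shiftE u v f ∉ G)).Nonempty) :
    wG (compG u v G) < wG G := by
  classical
  have hinj : ∀ a ∈ G.filter (fun f => v ∈ f ∧ u ∉ f ∧ shiftE u v f ∉ G),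
      ∀ b ∈ G.filter (fun f => v ∈ f ∧ u ∉ f ∧ shiftE u v f ∉ G),
      shiftE u v a = shiftE u v b → a = b := by
    intro a ha b hb hab
    simp only [Finset.mem_filter] at ha hb
    rw [← shiftE_inv huv.ne ha.2.1 ha.2.2.1, ← shiftE_inv huv.ne hb.2.1 hb.2.2.1, hab]
  have hdisj : Disjoint (G.filter (fun f => ¬ (v ∈ f ∧ u ∉ f ∧ shiftE u v f ∉ G)))
      ((G.filter (fun f => v ∈ f ∧ u ∉ f ∧ shiftE u v f ∉ G)).image (shiftE u v)) := by
    rw [Finset.disjoint_right]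
    rintro g hg
    simp only [Finset.mem_image, Finset.mem_filter] at hg
    obtain ⟨f, ⟨hf, hm⟩, rfl⟩ := hg
    simp only [Finset.mem_filter, not_and]
    intro hG'
    exact absurd hG' hm.2.2
  rw [wG, compG, Finset.sum_union hdisj, Finset.sum_image hinj]
  calc (G.filter (fun f => ¬ (v ∈ f ∧ u ∉ f ∧ shiftE u v f ∉ G))).sum wE +
        (G.filter (fun f => v ∈ f ∧ u ∉ f ∧ shiftE u v f ∉ G)).sum (fun f => wE (shiftE u v f))
      < (G.filter (fun f => ¬ (v ∈ f ∧ u ∉ f ∧ shiftE u v f ∉ G))).sum wE +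
        (G.filter (fun f => v ∈ f ∧ u ∉ f ∧ shiftE u v f ∉ G)).sum wE := by
        apply Nat.add_lt_add_left
        apply Finset.sum_lt_sum_of_nonempty hne
        intro f hf
        simp only [Finset.mem_filter] at hf
        exact wE_shiftE_lt huv hf.2.1 hf.2.2.1
    _ = wG G := by
        rw [add_comm, Finset.sum_filter_add_sum_filter_not]; rfl



lemma stable_of_fixed {n : ℕ} {G : Finset (Finset ℕ)}
    (hfix : ∀ u v f, 1 ≤ u → u < v → f ∈ G → v ∈ f → u ∉ f → shiftE u v f ∈ G) :
    StableGraph n G := by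
  classical
  intro e f₀ he hdom₀ hf₀
  have key : ∀ W : ℕ, ∀ f : Finset ℕ, wE f = W → DomLE e f → f ∈ G → e ∈ G := by
    intro W
    induction W using Nat.strong_induction_on with
    | _ W ih =>
      intro f hWf hdom hf
      by_cases hef : e = f
      · exact hef ▸ hf
      set a := e.sort (· ≤ ·) with ha
      set b := f.sort (· ≤ ·) with hb
      have hlen : a.length = b.length := hdom.length_eq
      have hab : a ≠ b := by
        intro h
        apply hef
        have h2 := congrArg List.toFinset h
        rwa [Finset.sort_toFinset, Finset.sort_toFinset] at h2
      have hexP : ∃ j, j < b.length ∧ a.getD j 0 ≠ b.getD j 0 := by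
        by_contra hc
        push_neg at hc
        apply hab
        apply List.ext_getElem hlen
        intro p hp1 hp2
        have h3 := hc p hp2
        rwa [List.getD_eq_getElem _ _ hp1, List.getD_eq_getElem _ _ hp2] at h3
      set j := Nat.find hexP with hj
      obtain ⟨hjb, hjne⟩ := Nat.find_spec hexP
      have hja : j < a.length := hlen ▸ hjb
      have hmin : ∀ l, l < j → l < b.length → a.getD l 0 = b.getD l 0 := by
        intro l hl hlb
        have h4 := Nat.find_min hexP hl
        push_neg at h4
        exact h4 hlb
      set u := a.getD j 0 with hu
      set v := b.getD j 0 with hv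
      have hua : u = a[j] := List.getD_eq_getElem a 0 hja
      have hvb : v = b[j] := List.getD_eq_getElem b 0 hjb
      have hle : u ≤ v := by
        have h2 := (List.forall₂_iff_get.mp hdom).2 j hja hjb
        rw [hua, hvb]
        simpa [List.get_eq_getElem] using h2
      have hultv : u < v := lt_of_le_of_ne hle hjne
      have hsa : a.Pairwise (· < ·) := (Finset.sortedLT_sort e).pairwise
      have hsb : b.Pairwise (· < ·) := (Finset.sortedLT_sort f).pairwise
      have hnb : b.Nodup := Finset.sort_nodup f _
      have hue : u ∈ e := by
        rw [← Finset.mem_sort (· ≤ ·), ← ha]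
        exact hua ▸ List.getElem_mem hja
      have h1u : 1 ≤ u := (Finset.mem_Icc.mp (he hue)).1
      have hvf : v ∈ f := by
        rw [← Finset.mem_sort (· ≤ ·), ← hb]
        exact hvb ▸ List.getElem_mem hjb
      have hunf : u ∉ f := by
        intro huf
        have hub : u ∈ b := by rw [hb, Finset.mem_sort]; exact huf
        obtain ⟨l, hlb, hlv⟩ := List.mem_iff_getElem.mp hub
        have hlj : l < j := by
          rcases lt_trichotomy l j with h' | rfl | h'
          · exact h'
          · exact (hjne (hvb.trans hlv).symm).elim
          · have h5 := List.pairwise_iff_getElem.mp hsb j l hjb hlb h'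
            rw [hlv, ← hvb] at h5
            omega
        have hla : l < a.length := hlen ▸ hlb
        have heqd := hmin l hlj hlb
        rw [List.getD_eq_getElem _ _ hla, List.getD_eq_getElem _ _ hlb, hlv] at heqd
        have h6 := List.pairwise_iff_getElem.mp hsa l j hla hja hlj
        rw [heqd, ← hua] at h6
        exact lt_irrefl u h6
      have hg : shiftE u v f ∈ G := hfix u v f h1u hultv hf hvf hunf
      set c := b.set j u with hc
      have hclen : c.length = b.length := List.length_set
      have hcsorted : c.Pairwise (· < ·) := by
        rw [List.pairwise_iff_getElem]
        intro p q hp hq hpq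
        rw [hclen] at hp hq
        rw [List.getElem_set, List.getElem_set]
        by_cases hjp : j = p
        · subst hjp
          rw [if_pos rfl, if_neg (by omega)]
          calc u < v := hultv
            _ = b[j] := hvb
            _ ≤ b[q] := le_of_lt (List.pairwise_iff_getElem.mp hsb j q hp hq hpq)
        · rw [if_neg hjp]
          by_cases hjq : j = q
          · subst hjq
            rw [if_pos rfl]
            have hpj : p < j := by omega
            have heqd := hmin p hpj hp
            rw [List.getD_eq_getElem _ _ (hlen ▸ hp), List.getD_eq_getElem _ _ hp] at heqd
            calc b[p] = a[p] := heqd.symm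
              _ < a[j] := List.pairwise_iff_getElem.mp hsa p j (hlen ▸ hp) hja hpj
              _ = u := hua.symm
          · rw [if_neg hjq]
            exact List.pairwise_iff_getElem.mp hsb p q hp hq hpq
      have hcnodup : c.Nodup := hcsorted.nodup
      have hctf : c.toFinset = shiftE u v f := by
        ext x
        rw [List.mem_toFinset, shiftE, Finset.mem_insert, Finset.mem_erase]
        constructor
        · intro hx
          obtain ⟨p, hp, hpx⟩ := List.mem_iff_getElem.mp hx
          rw [hclen] at hp
          rw [List.getElem_set] at hpx
          by_cases hjp : j = p
          · rw [if_pos hjp] at hpx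
            exact Or.inl hpx.symm
          · rw [if_neg hjp] at hpx
            right
            refine ⟨?_, ?_⟩
            · intro hxv
              apply hjp
              apply (hnb.getElem_inj_iff).mp
              rw [hpx, ← hvb, hxv]
            · rw [← Finset.mem_sort (· ≤ ·), ← hb]
              exact hpx ▸ List.getElem_mem hp
        · rintro (rfl | ⟨hxv, hxf⟩)
          · rw [List.mem_iff_getElem]
            refine ⟨j, by omega, ?_⟩
            rw [List.getElem_set, if_pos rfl]
          · have hxb : x ∈ b := by rw [hb, Finset.mem_sort]; exact hxf
            obtain ⟨p, hp, hpx⟩ := List.mem_iff_getElem.mp hxb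
            rw [List.mem_iff_getElem]
            refine ⟨p, by omega, ?_⟩
            rw [List.getElem_set, if_neg ?_]
            · exact hpx
            · intro hjp
              apply hxv
              subst hjp
              rw [← hpx]
              exact hvb.symm
      have hsortg : (shiftE u v f).sort (· ≤ ·) = c := by
        rw [← hctf]
        exact (List.toFinset_sort (· ≤ ·) hcnodup).mpr
          (hcsorted.imp (fun h' => le_of_lt h'))
      have hdomg : DomLE e (shiftE u v f) := by
        rw [DomLE, ← ha, hsortg]
        apply List.forall₂_of_length_eq_of_get
        · rw [hclen, hlen]
        · intro p hp1 hp2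
          simp only [List.get_eq_getElem]
          rw [hclen] at hp2
          rw [List.getElem_set]
          by_cases hjp : j = p
          · subst hjp
            rw [if_pos rfl, ← hua]
          · rw [if_neg hjp]
            have h2 := (List.forall₂_iff_get.mp hdom).2 p hp1 hp2
            simpa [List.get_eq_getElem] using h2
      have hlt : wE (shiftE u v f) < W := hWf ▸ wE_shiftE_lt hultv hvf hunf
      exact ih _ hlt _ rfl hdomg hg
  exact key (wE f₀) f₀ rfl hdom₀ hf₀

lemma sum_phi_update {m : ℕ} {α : Type*} [DecidableEq (Fin m)] (G : Fin m → α) (i : Fin m) (x : α)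
    (φ : α → ℕ) :
    ∑ j, φ (Function.update G i x j) = φ x + ∑ j ∈ Finset.univ.erase i, φ (G j) := by
  calc ∑ j, φ (Function.update G i x j)
      = ∑ j, Function.update (fun j => φ (G j)) i (φ x) j := by
        apply Finset.sum_congr rfl
        intro j _
        by_cases hji : j = i
        · subst hji; simp
        · simp [Function.update_of_ne hji]
    _ = φ x + ∑ j ∈ Finset.univ \ {i}, φ (G j) :=
        Finset.sum_update_of_mem (Finset.mem_univ i) _ _
    _ = φ x + ∑ j ∈ Finset.univ.erase i, φ (G j) := by
        rw [Finset.sdiff_singleton_eq_erase]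

lemma sum_phi_split {m : ℕ} {α : Type*} [DecidableEq (Fin m)] (G : Fin m → α) (i : Fin m)
    (φ : α → ℕ) : ∑ j, φ (G j) = φ (G i) + ∑ j ∈ Finset.univ.erase i, φ (G j) :=
  (Finset.add_sum_erase Finset.univ (fun j => φ (G j)) (Finset.mem_univ i)).symm


def muF (n k : ℕ) {m : ℕ} (G : Fin m → Finset (Finset ℕ)) : ℕ :=
  (k * n + 1) * (m * Nat.choose n k - ∑ i, (G i).card) + ∑ i, wG (G i)

lemma main_induction (n k : ℕ) {m : ℕ} :
    ∀ N : ℕ, ∀ G : Fin m → Finset (Finset ℕ), muF n k G ≤ N →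
      (∀ i, IsKGraphOn n k (G i)) → ¬ HasRainbowMatching G →
      ∃ G' : Fin m → Finset (Finset ℕ), (∀ i, IsKGraphOn n k (G' i)) ∧
        (∀ i, StableGraph n (G' i)) ∧ Saturated n k G' ∧
        (∀ i, (G i).card ≤ (G' i).card) := by
  classical
  intro N
  induction N using Nat.strong_induction_on with
  | _ N ih =>
    intro G hmu hK hno
    by_cases hcomp : ∃ u v : ℕ, 1 ≤ u ∧ u < v ∧
        ∃ i : Fin m, ∃ f ∈ G i, v ∈ f ∧ u ∉ f ∧ shiftE u v f ∉ G i
    · obtain ⟨u, v, h1u, huv, i0, f0, hf0, hv0, hu0, hs0⟩ := hcomp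
      set G' : Fin m → Finset (Finset ℕ) := fun i => compG u v (G i) with hG'
      have hK' : ∀ i, IsKGraphOn n k (G' i) := fun i => isK_compG h1u huv (hK i)
      have hno' : ¬ HasRainbowMatching G' := fun h => hno (hrm_compG huv.ne h)
      have hcard' : ∀ i, (G' i).card = (G i).card := fun i => compG_card huv.ne (G i)
      have hwlt : ∑ i, wG (G' i) < ∑ i, wG (G i) := by
        apply Finset.sum_lt_sum
        · intro i _
          exact wG_compG_le huv (G i)
        · exact ⟨i0, Finset.mem_univ _,
            wG_compG_lt huv ⟨f0, Finset.mem_filter.mpr ⟨hf0, hv0, hu0, hs0⟩⟩⟩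
      have hmult : muF n k G' < muF n k G := by
        unfold muF
        have hsum : ∑ i, (G' i).card = ∑ i, (G i).card :=
          Finset.sum_congr rfl fun i _ => hcard' i
        rw [hsum]
        omega
      obtain ⟨G'', a, b, c, d⟩ :=
        ih (muF n k G') (lt_of_lt_of_le hmult hmu) G' le_rfl hK' hno'
      exact ⟨G'', a, b, c, fun i => le_trans (le_of_eq (hcard' i).symm) (d i)⟩
    · by_cases hsat : ∃ (i : Fin m) (e : Finset ℕ), e ⊆ Finset.Icc 1 n ∧ e.card = k ∧
          e ∉ G i ∧ ¬ HasRainbowMatching (Function.update G i (insert e (G i)))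
      · obtain ⟨i, e, hesub, hecard, henin, hnoRM⟩ := hsat
        set G' := Function.update G i (insert e (G i)) with hG'
        have hK' : ∀ j, IsKGraphOn n k (G' j) := by
          intro j
          by_cases hji : j = i
          · subst hji
            rw [hG', Function.update_self]
            intro g hg
            rcases Finset.mem_insert.mp hg with rfl | hg
            · exact ⟨hesub, hecard⟩
            · exact hK j g hg
          · rw [hG', Function.update_of_ne hji]
            exact hK j
        have hcardsge : ∀ j, (G j).card ≤ (G' j).card := by
          intro j
          by_cases hji : j = i
          · subst hji
            rw [hG', Function.update_self, Finset.card_insert_of_notMem henin]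
            omega
          · rw [hG', Function.update_of_ne hji]
        have hsum' : ∑ j, (G' j).card = (∑ j, (G j).card) + 1 := by
          rw [hG', sum_phi_update G i (insert e (G i)) Finset.card,
            Finset.card_insert_of_notMem henin,
            sum_phi_split G i Finset.card]
          omega
        have hw' : ∑ j, wG (G' j) = (∑ j, wG (G j)) + wE e := by
          rw [hG', sum_phi_update G i (insert e (G i)) wG,
            sum_phi_split G i wG]
          have h9 : wG (insert e (G i)) = wE e + wG (G i) := Finset.sum_insert henin
          omega
        have hwe : wE e ≤ k * n := by
          calc wE e ≤ ∑ _x ∈ e, n :=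
                Finset.sum_le_sum fun x hx => (Finset.mem_Icc.mp (hesub hx)).2
            _ = k * n := by rw [Finset.sum_const, hecard, smul_eq_mul]
        have hSbound : ∑ j, (G' j).card ≤ m * Nat.choose n k := by
          calc ∑ j, (G' j).card ≤ ∑ _j : Fin m, Nat.choose n k := by
                apply Finset.sum_le_sum
                intro j _
                have hsub : G' j ⊆ (Finset.Icc 1 n).powersetCard k := by
                  intro g hg
                  rw [Finset.mem_powersetCard]
                  exact hK' j g hg
                calc (G' j).card ≤ ((Finset.Icc 1 n).powersetCard k).card :=
                      Finset.card_le_card hsub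
                  _ = Nat.choose n k := by
                      rw [Finset.card_powersetCard, Nat.card_Icc]
                      norm_num
            _ = m * Nat.choose n k := by
                rw [Finset.sum_const, Finset.card_univ, Fintype.card_fin, smul_eq_mul]
        have hmult : muF n k G' < muF n k G := by
          unfold muF
          rw [hsum', hw']
          set B := k * n + 1 with hB
          set T := m * Nat.choose n k with hT
          set S := ∑ j, (G j).card with hS
          have h1 : S + 1 ≤ T := hsum' ▸ hSbound
          have h2 : T - S = (T - (S + 1)) + 1 := by omega
          rw [h2, Nat.mul_add, Nat.mul_one]
          have h3 : wE e < B := by omega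
          omega
        obtain ⟨G'', a, b, c, d⟩ :=
          ih (muF n k G') (lt_of_lt_of_le hmult hmu) G' le_rfl hK' hnoRM
        exact ⟨G'', a, b, c, fun j => le_trans (hcardsge j) (d j)⟩
      · refine ⟨G, hK, ?_, ⟨hno, ?_⟩, fun i => le_rfl⟩
        · intro i
          apply stable_of_fixed
          intro u v f h1u huv hf hv hu
          by_contra hc
          exact hcomp ⟨u, v, h1u, huv, i, f, hf, hv, hu, hc⟩
        · intro i e he1 he2 he3
          by_contra hc
          exact hsat ⟨i, e, he1, he2, he3, hc⟩


/-- one can pass to a stable and saturated family with sizes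
at least as large. -/
theorem exists_stable_saturated_family (n k m : ℕ) (hk : 0 < k) (hm : 0 < m)
    (hn : n ≥ k * m)
    (F : Fin m → Finset (Finset ℕ)) (hF : ∀ i, IsKGraphOn n k (F i))
    (hno : ¬ HasRainbowMatching F) :
    ∃ F' : Fin m → Finset (Finset ℕ), (∀ i, IsKGraphOn n k (F' i)) ∧
      (∀ i, StableGraph n (F' i)) ∧ Saturated n k F' ∧
      (∀ i, (F' i).card ≥ (F i).card) := by
  obtain ⟨F', a, b, c, d⟩ := main_induction n k (muF n k F) F le_rfl hF hno
  exact ⟨F', a, b, c, d⟩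
end

section
/- Let n, m, k be positive integers with n ≥ km − 1 and m ≥ 2. Then f(n,m,k) ≥ f(n−1, m−1, k) + C(n−1, k−1), where C(a,b) denotes the binomial coefficient. -/
open Finset

lemma chooseL1 (a r : ℕ) : ∀ e, a.choose (r+1) + e * a.choose r ≤ (a+e).choose (r+1) := by
  intro e
  induction e with
  | zero => simp
  | succ e ih =>
    have pas : (a+e+1).choose (r+1) = (a+e).choose r + (a+e).choose (r+1) :=
      Nat.choose_succ_succ _ _
    have mono : a.choose r ≤ (a+e).choose r := Nat.choose_mono _ (by omega)
    have h1 : a + (e+1) = a + e + 1 := by omega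
    rw [h1, pas]
    have h2 : (e+1) * a.choose r = e * a.choose r + a.choose r := by ring
    omega

lemma chooseIdent (x r : ℕ) : (x+1).choose r * (x+1-r) = (x+1) * x.choose r := by
  have h1 := Nat.choose_succ_right_eq (x+1) r
  have h2 := Nat.add_one_mul_choose_eq x r
  omega

lemma chooseL2 (a r : ℕ) : ∀ t, (a+t).choose r * (a+1-r-t*r) ≤ (a+1-r) * a.choose r := by
  intro t
  induction t with
  | zero => simp [Nat.mul_comm]
  | succ t ih =>
    by_cases hra : r ≤ a
    · by_cases hB : t*r + r ≤ a+1-r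
      · set B := a + 1 - r with hBdef
        obtain ⟨d, hdd⟩ : ∃ d, B = t*r + r + d := ⟨B - (t*r+r), by omega⟩
        have hdB : d ≤ B := by omega
        have e1 : a + 1 - r - (t+1)*r = d := by
          have : (t+1)*r = t*r + r := by ring
          omega
        have e2 : a + 1 - r - t*r = r + d := by omega
        rw [e2] at ih
        have id1 : (a+t+1).choose r * (a+t+1-r) = (a+t+1) * (a+t).choose r :=
          chooseIdent (a+t) r
        have e3 : a+t+1-r = B + t := by omega
        have e4 : a+t+1 = B + r + t := by omega
        have hposs : 0 < B + t := by omega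
        have key : (B+r+t) * d ≤ (B+t) * (r+d) := by nlinarith [Nat.mul_le_mul_left r hdB]
        have goal' : a + (t+1) = a + t + 1 := by omega
        rw [goal', e1]
        apply Nat.le_of_mul_le_mul_right _ hposs
        calc (a+t+1).choose r * d * (B+t)
            = ((a+t+1).choose r * (a+t+1-r)) * d := by rw [e3]; ring
          _ = ((a+t+1) * (a+t).choose r) * d := by rw [id1]
          _ = (a+t).choose r * ((B+r+t) * d) := by rw [e4]; ring
          _ ≤ (a+t).choose r * ((B+t) * (r+d)) := Nat.mul_le_mul_left _ key
          _ = ((a+t).choose r * (r+d)) * (B+t) := by ring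
          _ ≤ (B * a.choose r) * (B+t) := Nat.mul_le_mul_right _ ih
      · have h0 : a + 1 - r - (t+1)*r = 0 := by
          have : (t+1)*r = t*r + r := by ring
          omega
        rw [h0]
        simp
    · have h0 : a + 1 - r = 0 := by omega
      rw [h0]
      simp


/-- `f(n,m,k) ≥ f(n-1,m-1,k) + C(n-1,k-1)`. -/
theorem fEMC_recursion (n m k : ℕ) (hk : 0 < k) (hm : 2 ≤ m)
    (hn : n ≥ k * m - 1) :
    fEMC n m k ≥ fEMC (n - 1) (m - 1) k + Nat.choose (n - 1) (k - 1) := by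
  by_cases hk1 : k = 1
  · subst hk1
    simp only [fEMC, Nat.choose_one_right, one_mul, Nat.sub_self, Nat.choose_zero_right]
    omega
  have hk2 : 2 ≤ k := by omega
  have hkme : k*(m-1) + k*1 = k*m := by
    rw [← Nat.mul_add]; congr 1; omega
  have hkm2 : k*2 ≤ k*m := Nat.mul_le_mul_left k hm
  have hn2 : n ≥ 2*m-1 := by
    have := Nat.mul_le_mul_right m hk2; omega
  have hpas : n.choose k = (n-1).choose (k-1) + (n-1).choose k := by
    have h := Nat.choose_succ_succ (n-1) (k-1)
    simp only [Nat.succ_eq_add_one] at h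
    rw [show n-1+1 = n from by omega, show k-1+1 = k from by omega] at h
    exact h
  have hmono1 : (n-m+1).choose k ≤ (n-1).choose k := Nat.choose_mono _ (by omega)
  unfold fEMC
  rw [← max_add_add_right, show n-1-(m-1)+1 = n-m+1 from by omega,
      show k*(m-1)-1 = k*m-k-1 from by omega]
  apply max_le
  · -- A'-side
    refine le_trans ?_ (le_max_left _ _)
    omega
  · -- B'-side
    by_cases hm2 : m = 2
    · subst hm2
      rw [show k*2-k-1 = k-1 from by omega, Nat.choose_eq_zero_of_lt (by omega)]
      refine le_trans ?_ (le_max_left _ _)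
      omega
    have hm3 : 3 ≤ m := by omega
    -- identity B' = (m-2) * C(km-k-1, k-1)
    have hkme2 : k*(m-2) + k*2 = k*m := by
      rw [← Nat.mul_add]; congr 1; omega
    have hBid : (k*m-k-1).choose k = (m-2) * (k*m-k-1).choose (k-1) := by
      have h := Nat.choose_succ_right_eq (k*m-k-1) (k-1)
      rw [show k-1+1 = k from by omega] at h
      rw [show k*m-k-1 - (k-1) = k*(m-2) from by omega] at h
      apply Nat.eq_of_mul_eq_mul_right hk
      rw [h, show (m-2) * (k*m-k-1).choose (k-1) * k = (k*m-k-1).choose (k-1) * (k*(m-2)) from by ring]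
    by_cases hcase : k*m-k-1 ≤ n-m+1
    · -- A route
      have hsub := chooseL1 (n-m+1) (k-1) (m-2)
      rw [show k-1+1 = k from by omega, show n-m+1+(m-2) = n-1 from by omega] at hsub
      have hmono2 : (k*m-k-1).choose (k-1) ≤ (n-m+1).choose (k-1) := Nat.choose_mono _ hcase
      have hmul : (m-2) * (k*m-k-1).choose (k-1) ≤ (m-2)*((n-m+1).choose (k-1)) :=
        Nat.mul_le_mul_left _ hmono2
      refine le_trans ?_ (le_max_left _ _)
      omega
    · -- B route
      have harith : n-1 ≤ k*m-k-1 + (m-3) := by omega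
      have hmono3 : (n-1).choose (k-1) ≤ (k*m-k-1 + (m-3)).choose (k-1) :=
        Nat.choose_mono _ harith
      have hL2 := chooseL2 (k*m-k-1) (k-1) (m-3)
      have e7 : (m-3)*(k-1) + (m-3) + 3*(k-1) + 3 = k*m := by
        obtain ⟨m₃, rfl⟩ : ∃ m₃, m = m₃+3 := ⟨m-3, by omega⟩
        obtain ⟨k₁, rfl⟩ : ∃ k₁, k = k₁+1 := ⟨k-1, by omega⟩
        simp only [Nat.add_sub_cancel]
        ring
      rw [show k*m-k-1+1-(k-1)-(m-3)*(k-1) = m+k-2 from by omega,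
          show k*m-k-1+1-(k-1) = k*(m-2)+1 from by omega] at hL2
      -- hL2 : C(a+(m-3),k-1) * (m+k-2) ≤ (k*(m-2)+1) * C(a,k-1)
      have hkk : 1 ≤ k*k := Nat.one_le_iff_ne_zero.mpr (by positivity)
      have e8 : k*(m+k-2) = k*(m-2) + k*k := by
        rw [← Nat.mul_add]; congr 1; omega
      have hcore : (k*m-k-1+(m-3)).choose (k-1) ≤ k * (k*m-k-1).choose (k-1) := by
        apply Nat.le_of_mul_le_mul_right _ (show 0 < m+k-2 from by omega)
        calc (k*m-k-1+(m-3)).choose (k-1) * (m+k-2)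
            ≤ (k*(m-2)+1) * (k*m-k-1).choose (k-1) := hL2
          _ ≤ (k*(m+k-2)) * (k*m-k-1).choose (k-1) := by
              apply Nat.mul_le_mul_right; omega
          _ = k * (k*m-k-1).choose (k-1) * (m+k-2) := by
              rw [show k*(m+k-2) = (m+k-2)*k from by ring]; ring
      have hsubB := chooseL1 (k*m-k-1) (k-1) k
      rw [show k-1+1 = k from by omega, show k*m-k-1+k = k*m-1 from by omega] at hsubB
      refine le_trans ?_ (le_max_right _ _)
      omega
end

section
/- There exists c₀ > 0 such that for every real c with 0 < c < c₀ there exist δ > 0 and n₀ such that the following holds for all integers n ≥ n₀ and m with n/27 ≤ m ≤ (1−c)n/3: if F is a stable 3-graph on vertex set [n] with |F| > f(n,m,3), then for every integer j with 0 ≤ j ≤ δn, the triple {2j+1, 2j+2, 3m−j} is an edge of F. -/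
open Finset

lemma sort_triple {x y z : ℕ} (hxy : x < y) (hyz : y < z) :
    ({x, y, z} : Finset ℕ).sort (· ≤ ·) = [x, y, z] := by
  rw [Finset.sort_insert, Finset.sort_insert, Finset.sort_singleton]
  · simp; omega
  · simp; omega
  · intro b hb; simp at hb; omega
  · simp; omega

lemma six_choose3 (k : ℕ) : (k+3).choose 3 * 6 = (k+3) * (k+2) * (k+1) := by
  have h := Nat.descFactorial_eq_factorial_mul_choose (k+3) 3
  simp only [Nat.descFactorial_succ, Nat.descFactorial_zero, Nat.factorial] at h
  simp only [show k+3-2 = k+1 from rfl, show k+3-1 = k+2 from rfl, Nat.sub_zero] at h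
  ring_nf at h ⊢
  omega

lemma choose3_real (x : ℕ) : ((x.choose 3 : ℕ) : ℝ) = (x:ℝ)*((x:ℝ)-1)*((x:ℝ)-2)/6 := by
  match x with
  | 0 => simp [Nat.choose]
  | 1 => simp [Nat.choose]
  | 2 => simp [Nat.choose]
  | (k+3) =>
    have h := six_choose3 k
    have h2 : (((k+3).choose 3 * 6 : ℕ) : ℝ) = (((k+3) * (k+2) * (k+1) : ℕ) : ℝ) := by rw [h]
    push_cast at h2 ⊢
    linarith

lemma case1 (N M J : ℝ) (h1 : N ≥ 1000000) (h2 : N/27 ≤ M) (h3 : 40*M ≤ 11*N)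
    (h4 : 0 ≤ J) (h5 : J ≤ N/1000) :
    (N-2*J)*(N-2*J-1)*(N-2*J-2) ≥
      (N-M+1)*(N-M)*(N-M-1) + (3*M-3*J-1)*(3*M-3*J-2)*(3*M-3*J-3) := by
  nlinarith [sq_nonneg N, sq_nonneg M, sq_nonneg J, sq_nonneg (N-M), sq_nonneg (N-3*M),
    mul_nonneg h4 h4, sq_nonneg (M-J), mul_nonneg (mul_nonneg h4 h4) h4, sq_nonneg (N - 40*M/11)]

lemma case2 (N M J : ℝ) (h1 : N ≥ 1000000) (h2 : 11*N ≤ 40*M)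
    (h4 : 0 ≤ J) (h5 : J ≤ N/1000) :
    (3*M-1)*(3*M-2)*(3*M-3) + (N-2*J)*(N-2*J-1)*(N-2*J-2) ≥
      N*(N-1)*(N-2) + (3*M-3*J-1)*(3*M-3*J-2)*(3*M-3*J-3) := by
  have key : (0:ℝ) ≤ 3*(27*M^2 - 27*M*J + 9*J^2 - 36*M + 18*J + 11)
      - 2*(3*N^2 - 6*N*J + 4*J^2 - 6*N + 6*J + 2) := by
    nlinarith [mul_nonneg h4 h4, mul_nonneg h4 (by linarith : (0:ℝ) ≤ N)]
  nlinarith [mul_nonneg h4 key]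


/-- a large stable 3-graph contains the edges `{2j+1, 2j+2, 3m-j}`. -/
theorem stable_contains_special_edges :
    ∃ c₀ : ℝ, 0 < c₀ ∧ ∀ c : ℝ, 0 < c → c < c₀ →
      ∃ δ : ℝ, 0 < δ ∧ ∃ n₀ : ℕ, ∀ n : ℕ, n ≥ n₀ → ∀ m : ℕ, 0 < m →
        (n : ℝ) / 27 ≤ (m : ℝ) → (m : ℝ) ≤ (1 - c) * n / 3 →
        ∀ F : Finset (Finset ℕ), IsKGraphOn n 3 F → StableGraph n F →
          F.card > fEMC n m 3 →
          ∀ j : ℕ, (j : ℝ) ≤ δ * n →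
            ({2 * j + 1, 2 * j + 2, 3 * m - j} : Finset ℕ) ∈ F := by
  refine ⟨1/100, by norm_num, fun c hc hc' => ⟨1/1000, by norm_num, 1000000,
    fun n hn m hm hm1 hm2 F hK hS hcard j hj => ?_⟩⟩
  -- basic natural-number facts
  have hnR : (1000000:ℝ) ≤ (n:ℝ) := by exact_mod_cast hn
  have h27 : n ≤ 27 * m := by
    have : (n:ℝ) ≤ 27 * m := by linarith
    exact_mod_cast this
  have h3m : 3 * m < n := by
    have hn0 : (0:ℝ) < (n:ℝ) := by linarith
    have : (3 * m : ℝ) < n := by nlinarith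
    exact_mod_cast this
  have hjn : 1000 * j ≤ n := by
    have : (1000 * j : ℝ) ≤ n := by linarith
    exact_mod_cast this
  -- enough room
  have hroom : 2 * j + 2 < 3 * m - j := by omega
  by_contra h0
  -- the up-set U of the missing edge
  set U : Finset (Finset ℕ) :=
    ((Finset.Icc (2*j+1) n).powersetCard 3) \ ((Finset.Icc (2*j+1) (3*m-j-1)).powersetCard 3) with hU
  have hsub : (Finset.Icc (2*j+1) (3*m-j-1)).powersetCard 3 ⊆
      (Finset.Icc (2*j+1) n).powersetCard 3 :=
    Finset.powersetCard_mono (Finset.Icc_subset_Icc_right (by omega))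
  have c1 : (Finset.Icc (2*j+1) n).card = n - 2*j := by rw [Nat.card_Icc]; omega
  have c2 : (Finset.Icc (2*j+1) (3*m-j-1)).card = 3*m - 3*j - 1 := by rw [Nat.card_Icc]; omega
  have cardU : U.card = (n - 2*j).choose 3 - (3*m - 3*j - 1).choose 3 := by
    rw [hU, Finset.card_sdiff_of_subset hsub, Finset.card_powersetCard, Finset.card_powersetCard, c1, c2]
  -- every member of U dominates the missing edge, hence is not in F
  have hdom : ∀ e ∈ U, DomLE ({2*j+1, 2*j+2, 3*m-j} : Finset ℕ) e := by
    intro e he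
    rw [hU, Finset.mem_sdiff, Finset.mem_powersetCard] at he
    obtain ⟨⟨hsub1, hcard3⟩, hnot⟩ := he
    have hx : ∃ x ∈ e, 3*m - j ≤ x := by
      by_contra hx
      push_neg at hx
      exact hnot (Finset.mem_powersetCard.2 ⟨fun y hy => by
        have h1 := hsub1 hy
        rw [Finset.mem_Icc] at h1 ⊢
        have := hx y hy
        omega, hcard3⟩)
    obtain ⟨x, hxe, hxge⟩ := hx
    obtain ⟨a, b, cc, hl⟩ : ∃ a b cc, e.sort (·≤·) = [a, b, cc] :=
      List.length_eq_three.1 (by rw [Finset.length_sort, hcard3])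
    have hsorted := (Finset.sortedLT_sort e).pairwise
    rw [hl] at hsorted
    have hab : a < b := (List.pairwise_cons.1 hsorted).1 b (by simp)
    have hbc : b < cc := (List.pairwise_cons.1 (List.pairwise_cons.1 hsorted).2).1 cc (by simp)
    have hmem : ∀ y ∈ e, y = a ∨ y = b ∨ y = cc := by
      intro y hy
      have : y ∈ e.sort (·≤·) := (Finset.mem_sort _).2 hy
      rw [hl] at this
      simpa using this
    have ha_mem : a ∈ e := by
      have : a ∈ e.sort (·≤·) := by rw [hl]; simp
      exact (Finset.mem_sort _).1 this
    have ha : 2*j + 1 ≤ a := by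
      have := hsub1 ha_mem; rw [Finset.mem_Icc] at this; omega
    have hcge : 3*m - j ≤ cc := by
      rcases hmem x hxe with rfl | rfl | rfl <;> omega
    unfold DomLE
    rw [sort_triple (by omega) (by omega : 2*j+2 < 3*m-j), hl]
    exact List.Forall₂.cons (by omega) (List.Forall₂.cons (by omega)
      (List.Forall₂.cons hcge List.Forall₂.nil))
  have he₀sub : ({2*j+1, 2*j+2, 3*m-j} : Finset ℕ) ⊆ Finset.Icc 1 n := by
    intro x hx
    simp only [Finset.mem_insert, Finset.mem_singleton] at hx
    rw [Finset.mem_Icc]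
    rcases hx with rfl | rfl | rfl <;> omega
  have hdisj : Disjoint F U := by
    rw [Finset.disjoint_right]
    intro e heU heF
    exact h0 (hS _ e he₀sub (hdom e heU) heF)
  -- F ∪ U fits inside all 3-subsets of [n]
  have hunion : F ∪ U ⊆ (Finset.Icc 1 n).powersetCard 3 := by
    intro e he
    rcases Finset.mem_union.1 he with he | he
    · exact Finset.mem_powersetCard.2 ⟨(hK e he).1, (hK e he).2⟩
    · rw [hU, Finset.mem_sdiff, Finset.mem_powersetCard] at he
      exact Finset.mem_powersetCard.2
        ⟨he.1.1.trans (Finset.Icc_subset_Icc_left (by omega)), he.1.2⟩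
  have hcount : F.card + U.card ≤ n.choose 3 := by
    have h1 := Finset.card_le_card hunion
    rw [Finset.card_union_of_disjoint hdisj, Finset.card_powersetCard, Nat.card_Icc] at h1
    simpa using h1
  have hmono : (3*m - 3*j - 1).choose 3 ≤ (n - 2*j).choose 3 :=
    Nat.choose_le_choose 3 (by omega)
  have hUeq : U.card + (3*m - 3*j - 1).choose 3 = (n - 2*j).choose 3 := by omega
  -- cast helpers
  have cast1 : ((n - 2*j : ℕ) : ℝ) = (n:ℝ) - 2*j := by
    have : 2*j ≤ n := by omega
    push_cast [this]; ring
  have cast2 : ((3*m - 3*j - 1 : ℕ) : ℝ) = 3*(m:ℝ) - 3*j - 1 := by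
    have h' : 3*j + 1 ≤ 3*m := by omega
    have : ((3*m - 3*j - 1 : ℕ) : ℝ) = ((3*m - (3*j+1) : ℕ) : ℝ) := by norm_num; omega
    rw [this]
    push_cast [h']; ring
  have hJ0 : (0:ℝ) ≤ (j:ℝ) := Nat.cast_nonneg j
  have hJn : (j:ℝ) ≤ (n:ℝ)/1000 := by linarith
  have hb1 : fEMC n m 3 ≥ n.choose 3 - (n - m + 1).choose 3 := le_max_left _ _
  have hb2 : fEMC n m 3 ≥ (3*m - 1).choose 3 := le_max_right _ _
  by_cases hsplit : 40 * m ≤ 11 * n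
  · -- branch 1
    have key : (n - m + 1).choose 3 + (3*m - 3*j - 1).choose 3 ≤ (n - 2*j).choose 3 := by
      have cast3 : ((n - m + 1 : ℕ) : ℝ) = (n:ℝ) - m + 1 := by
        have : m ≤ n := by omega
        push_cast [this]; ring
      have hr := case1 (n:ℝ) (m:ℝ) (j:ℝ) hnR hm1 (by exact_mod_cast hsplit) hJ0 hJn
      have : ((n - m + 1).choose 3 + (3*m - 3*j - 1).choose 3 : ℝ) ≤ ((n - 2*j).choose 3 : ℝ) := by
        push_cast
        rw [choose3_real, choose3_real, choose3_real, cast1, cast2, cast3]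
        linarith
      exact_mod_cast this
    omega
  · -- branch 2
    have key : n.choose 3 + (3*m - 3*j - 1).choose 3 ≤ (3*m - 1).choose 3 + (n - 2*j).choose 3 := by
      have cast4 : ((3*m - 1 : ℕ) : ℝ) = 3*(m:ℝ) - 1 := by
        have : 1 ≤ 3*m := by omega
        push_cast [this]; ring
      have hr := case2 (n:ℝ) (m:ℝ) (j:ℝ) hnR (by
        have : 11 * n ≤ 40 * m := by omega
        exact_mod_cast this) hJ0 hJn
      have : (n.choose 3 + (3*m - 3*j - 1).choose 3 : ℝ) ≤
          ((3*m - 1).choose 3 + (n - 2*j).choose 3 : ℝ) := by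
        push_cast
        rw [choose3_real, choose3_real, choose3_real, choose3_real, cast1, cast2, cast4]
        linarith
      exact_mod_cast this
    omega
end

section
/- Let x, y, a be positive integers with a < y and x ≥ 3y. Then f(x, y, 3) ≥ f(x, y−a, 3) + C(a,3). Moreover, if in addition x ≥ 3(y+a), then f(x, y, 3) ≥ f(x, y+a, 3) − 3ax². -/
open Finset

lemma choose_two_le_sq (m : ℕ) : m.choose 2 ≤ m ^ 2 := by
  induction m with
  | zero => simp
  | succ n ih =>
    rw [Nat.choose_succ_succ, Nat.choose_one_right]
    nlinarith

lemma choose_three_superadd (p q : ℕ) : p.choose 3 + q.choose 3 ≤ (p + q).choose 3 := by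
  induction q with
  | zero => simp
  | succ n ih =>
    have h1 : (p + (n + 1)).choose 3 = (p + n).choose 2 + (p + n).choose 3 := by
      have : p + (n + 1) = (p + n) + 1 := by omega
      rw [this, Nat.choose_succ_succ]
    have h2 : (n + 1).choose 3 = n.choose 2 + n.choose 3 := Nat.choose_succ_succ n 2
    have h3 : n.choose 2 ≤ (p + n).choose 2 := Nat.choose_le_choose 2 (by omega)
    omega

lemma choose_three_diff (n d : ℕ) : (n + d).choose 3 ≤ n.choose 3 + d * (n + d) ^ 2 := by
  induction d with
  | zero => simp
  | succ m ih =>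
    have h1 : (n + (m + 1)).choose 3 = (n + m).choose 2 + (n + m).choose 3 := by
      have : n + (m + 1) = (n + m) + 1 := by omega
      rw [this, Nat.choose_succ_succ]
    have h2 : (n + m).choose 2 ≤ (n + m) ^ 2 := choose_two_le_sq _
    have h3 : (m : ℕ) * (n + m) ^ 2 + (n + m) ^ 2 ≤ (m + 1) * (n + m + 1) ^ 2 := by
      have := Nat.mul_le_mul_left (m + 1) (Nat.pow_le_pow_left (Nat.le_succ (n + m)) 2)
      nlinarith
    have : n + (m + 1) = n + m + 1 := by omega
    nlinarith [ih]

/-- `f(x,y,3) ≥ f(x,y-a,3) + C(a,3)`, and if `x ≥ 3(y+a)` then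
`f(x,y,3) ≥ f(x,y+a,3) - 3ax²`. -/
theorem fEMC_shift (x y a : ℕ) (ha : 0 < a) (hx : 0 < x) (hay : a < y)
    (hxy : 3 * y ≤ x) :
    fEMC x (y - a) 3 + Nat.choose a 3 ≤ fEMC x y 3 ∧
      (3 * (y + a) ≤ x →
        (fEMC x (y + a) 3 : ℤ) - 3 * (a : ℤ) * (x : ℤ) ^ 2 ≤ (fEMC x y 3 : ℤ)) := by
  have hyx : y ≤ x := by omega
  constructor
  · -- part 1
    rw [fEMC, fEMC, ← max_add_add_right]
    apply max_le
    · -- A' + c ≤ max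
      refine le_trans ?_ (le_max_left _ _)
      have e1 : x - (y - a) + 1 = (x - y + 1) + a := by omega
      have hPQ : (x - y + 1).choose 3 + a.choose 3 ≤ (x - (y - a) + 1).choose 3 := by
        rw [e1]; exact choose_three_superadd _ _
      have hPX : (x - (y - a) + 1).choose 3 ≤ x.choose 3 :=
        Nat.choose_le_choose 3 (by omega)
      omega
    · -- B' + c ≤ max
      refine le_trans ?_ (le_max_right _ _)
      calc (3 * (y - a) - 1).choose 3 + a.choose 3
          ≤ (3 * (y - a) - 1 + a).choose 3 := choose_three_superadd _ _
        _ ≤ (3 * y - 1).choose 3 := Nat.choose_le_choose 3 (by omega)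
  · -- part 2
    intro hx2
    have hnat : fEMC x (y + a) 3 ≤ fEMC x y 3 + 3 * a * x ^ 2 := by
      rw [fEMC, fEMC]
      apply max_le
      · refine le_trans ?_ (Nat.add_le_add_right (le_max_left _ _) _)
        have e2 : x - y + 1 = (x - (y + a) + 1) + a := by omega
        have hQR : (x - y + 1).choose 3 ≤
            (x - (y + a) + 1).choose 3 + a * (x - y + 1) ^ 2 := by
          rw [e2]; exact choose_three_diff _ a
        have hsq : (x - y + 1) ^ 2 ≤ x ^ 2 := Nat.pow_le_pow_left (by omega) 2
        have hb : a * (x - y + 1) ^ 2 ≤ 3 * a * x ^ 2 := by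
          calc a * (x - y + 1) ^ 2 ≤ a * x ^ 2 := Nat.mul_le_mul_left a hsq
            _ ≤ 3 * a * x ^ 2 := by nlinarith
        omega
      · refine le_trans ?_ (Nat.add_le_add_right (le_max_right _ _) _)
        have e3 : 3 * (y + a) - 1 = (3 * y - 1) + 3 * a := by omega
        have hD : (3 * (y + a) - 1).choose 3 ≤
            (3 * y - 1).choose 3 + 3 * a * (3 * y - 1 + 3 * a) ^ 2 := by
          rw [e3]; exact choose_three_diff _ _
        have hsq : (3 * y - 1 + 3 * a) ^ 2 ≤ x ^ 2 := Nat.pow_le_pow_left (by omega) 2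
        have hb : 3 * a * (3 * y - 1 + 3 * a) ^ 2 ≤ 3 * a * x ^ 2 :=
          Nat.mul_le_mul_left _ hsq
        omega
    have := (Nat.cast_le (α := ℤ)).mpr hnat
    push_cast at this
    linarith
end

section
/- For every integer k ≥ 3 there exist positive reals c and n₂ such that the following holds: let n, m be integers with n ≥ km, n ≥ n₂ and m > (1−c)n/k, and let F = {F_1, ..., F_m} be a stable family of k-graphs on the common vertex set [n] such that |F_i| > C(km−1, k) for every i ∈ [m]. Then F admits a rainbow matching. -/
open Finset

namespace RainbowAux

open Finset List

/-- The staircase list `[a, a+1, ..., a+k-2, ℓ]`. -/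
def JList (k a ℓ : ℕ) : List ℕ := ((List.range (k-1)).map (a + ·)) ++ [ℓ]

lemma JList_sorted {k a ℓ : ℕ} (h : a + (k-1) ≤ ℓ) : (JList k a ℓ).Pairwise (· < ·) := by
  unfold JList
  rw [List.pairwise_append]
  refine ⟨?_, List.pairwise_singleton _ _, ?_⟩
  · have h1 : List.Pairwise (· < ·) (List.range (k-1)) := List.pairwise_lt_range
    exact List.Pairwise.map _ (fun hxy => by omega) h1
  · intro x hx y hy
    simp only [List.mem_map, List.mem_range] at hx
    simp only [List.mem_singleton] at hy
    obtain ⟨i, hi, rfl⟩ := hx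
    omega

lemma JList_length (k a ℓ : ℕ) : (JList k a ℓ).length = (k-1) + 1 := by
  simp [JList]

def JSet (k a ℓ : ℕ) : Finset ℕ := (JList k a ℓ).toFinset

lemma JSet_sort {k a ℓ : ℕ} (h : a + (k-1) ≤ ℓ) :
    Finset.sort (JSet k a ℓ) (· ≤ ·) = JList k a ℓ :=
  (List.toFinset_sort _ (JList_sorted h).nodup).mpr ((JList_sorted h).imp le_of_lt)

lemma mem_JSet {k a ℓ x : ℕ} : x ∈ JSet k a ℓ ↔ (∃ i < k-1, x = a + i) ∨ x = ℓ := by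
  simp only [JSet, JList, List.mem_toFinset, List.mem_append, List.mem_map, List.mem_range,
    List.mem_singleton]
  constructor
  · rintro (⟨i, hi, rfl⟩ | rfl)
    · exact Or.inl ⟨i, hi, rfl⟩
    · exact Or.inr rfl
  · rintro (⟨i, hi, rfl⟩ | rfl)
    · exact Or.inl ⟨i, hi, rfl⟩
    · exact Or.inr rfl

lemma JSet_subset_Icc {k a ℓ : ℕ} (h : a + (k-1) ≤ ℓ) : JSet k a ℓ ⊆ Icc a ℓ := by
  intro x hx
  rw [mem_JSet] at hx
  rw [Finset.mem_Icc]
  rcases hx with ⟨i, hi, rfl⟩ | rfl <;> omega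

end RainbowAux

namespace RainbowAux
open Finset List

/-- In a `<`-sorted list, the `j`-th entry is at least the first entry plus `j`. -/
lemma sorted_get_ge {L : List ℕ} (hL : L.Pairwise (· < ·)) (b : ℕ)
    (hb : ∀ x ∈ L, b ≤ x) : ∀ j (hj : j < L.length), b + j ≤ L.get ⟨j, hj⟩ := by
  intro j
  induction j with
  | zero => intro hj; simpa using hb _ (L.get_mem ⟨0, hj⟩)
  | succ j ih =>
      intro hj
      have hj' : j < L.length := Nat.lt_of_succ_lt hj
      have h1 := ih hj'
      have h2 : L.get ⟨j, hj'⟩ < L.get ⟨j+1, hj⟩ :=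
        hL.rel_get_of_lt (by exact Fin.mk_lt_mk.mpr (Nat.lt_succ_self j))
      omega

/-- The crucial domination fact: any `k`-set inside `[a,n]` with an element `≥ ℓ`
dominates the staircase set `{a, a+1, …, a+k-2, ℓ}`. -/
lemma domLE_JSet {k a ℓ n : ℕ} (hk : 1 ≤ k) (hlen : a + (k-1) ≤ ℓ)
    {e : Finset ℕ} (hecard : e.card = k) (hesub : e ⊆ Icc a n)
    (hex : ∃ x ∈ e, ℓ ≤ x) : DomLE (JSet k a ℓ) e := by
  unfold DomLE
  rw [JSet_sort hlen]
  set L : List ℕ := e.sort (· ≤ ·) with hLdef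
  have hlenL : L.length = k := by rw [hLdef, Finset.length_sort, hecard]
  have hlenJ : (JList k a ℓ).length = (k-1)+1 := JList_length k a ℓ
  have hLsorted : L.Pairwise (· < ·) := (Finset.sortedLT_sort e).pairwise
  have hLmem : ∀ x ∈ L, x ∈ e := fun x hx => (Finset.mem_sort _).1 hx
  have hLlow : ∀ x ∈ L, a ≤ x := fun x hx => (Finset.mem_Icc.1 (hesub (hLmem x hx))).1
  have hget := sorted_get_ge hLsorted a hLlow
  rw [List.forall₂_iff_get]
  constructor
  · rw [hlenJ, hlenL]; omega
  · intro i h1 h2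
    rw [hlenJ] at h1
    rw [hlenL] at h2
    rcases Nat.lt_or_ge i (k-1) with hi | hi
    · -- JList.get i = a + i
      have hgetJ : (JList k a ℓ).get ⟨i, by rw [hlenJ]; omega⟩ = a + i := by
        unfold JList
        rw [List.get_eq_getElem, List.getElem_append_left (by simpa using hi)]
        simp
      rw [hgetJ]
      exact hget i (by omega)
    · -- i = k-1, JList.get = ℓ
      have hieq : i = k - 1 := by omega
      subst hieq
      have hgetJ : (JList k a ℓ).get ⟨k-1, by rw [hlenJ]; omega⟩ = ℓ := by
        unfold JList
        rw [List.get_eq_getElem, List.getElem_append_right (by simp)]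
        simp
      rw [hgetJ]
      -- the last entry of L is at least ℓ
      obtain ⟨x, hxe, hxl⟩ := hex
      have hxL : x ∈ L := (Finset.mem_sort _).2 hxe
      obtain ⟨⟨j, hj⟩, hxj⟩ := List.mem_iff_get.1 hxL
      have : L.get ⟨j, hj⟩ ≤ L.get ⟨k-1, by omega⟩ := by
        rcases Nat.lt_or_ge j (k-1) with h | h
        · exact le_of_lt (hLsorted.rel_get_of_lt (Fin.mk_lt_mk.mpr h))
        · have : j = k - 1 := by omega
          subst this; exact le_refl _
      omega

end RainbowAux

namespace RainbowAux
open Finset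

/-- Telescoping: `C(x+g, K+1) = C(x, K+1) + Σ_{i<g} C(x+i, K)`. -/
lemma choose_add_eq (x g K : ℕ) :
    (x + g).choose (K+1) = x.choose (K+1) + ∑ i ∈ range g, (x+i).choose K := by
  induction g with
  | zero => simp
  | succ g ih =>
      rw [Finset.sum_range_succ, ← Nat.add_assoc, Nat.choose_succ_succ' (x+g) K, ih]
      omega

/-- Hockey stick: `Σ_{i<M} C(K+i, K) = C(K+M, K+1)`. -/
lemma sum_choose_diag (K M : ℕ) :
    ∑ i ∈ range M, (K+i).choose K = (K+M).choose (K+1) := by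
  induction M with
  | zero => simp
  | succ M ih =>
      rw [Finset.sum_range_succ, ih, ← Nat.add_assoc, Nat.choose_succ_succ' (K+M) K]
      omega

/-- Window shift bound: `C(x+d, κ+1) ≤ C(x, κ+1) + d·C(n, κ)` when `x + d ≤ n`. -/
lemma choose_shift_le (n x κ : ℕ) : ∀ d, x + d ≤ n →
    (x + d).choose (κ+1) ≤ x.choose (κ+1) + d * n.choose κ := by
  intro d
  induction d with
  | zero => simp
  | succ d ih =>
      intro hd
      have h1 : x + d ≤ n := by omega
      calc (x + (d+1)).choose (κ+1) = (x + d + 1).choose (κ+1) := by ring_nf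
        _ = (x+d).choose κ + (x+d).choose (κ+1) := Nat.choose_succ_succ' (x+d) κ
        _ ≤ n.choose κ + (x.choose (κ+1) + d * n.choose κ) :=
            Nat.add_le_add (Nat.choose_le_choose κ h1) (ih h1)
        _ = x.choose (κ+1) + (d+1) * n.choose κ := by ring

lemma factorial_mul_choose (x j : ℕ) : j.factorial * x.choose j = x.descFactorial j :=
  (Nat.descFactorial_eq_factorial_mul_choose x j).symm

/-- split of a range sum -/
lemma sum_range_split (f : ℕ → ℕ) (a b : ℕ) :
    ∑ i ∈ range (a + b), f i = (∑ i ∈ range a, f i) + ∑ i ∈ range b, f (a + i) := by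
  induction b with
  | zero => simp
  | succ b ih =>
      rw [← Nat.add_assoc, Finset.sum_range_succ, ih, Finset.sum_range_succ, Nat.add_assoc]

end RainbowAux

namespace RainbowAux
open Finset

lemma pow49 : ∀ k, 3 ≤ k → 4^k * k ≤ 9^k := by
  intro k hk
  induction k with
  | zero => omega
  | succ j ih =>
      rcases Nat.lt_or_ge j 3 with h3 | h3
      · interval_cases j
        · omega
        · omega
        · norm_num
      · have h := ih (by omega)
        have h1 : 4^(j+1) * (j+1) ≤ 4 * (4^j * j) * 2 := by
          have : j + 1 ≤ 2 * j := by omega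
          calc 4^(j+1) * (j+1) = 4 * 4^j * (j+1) := by ring
            _ ≤ 4 * 4^j * (2*j) := Nat.mul_le_mul_left _ (by omega)
            _ = 4 * (4^j * j) * 2 := by ring
        calc 4^(j+1) * (j+1) ≤ 4 * (4^j * j) * 2 := h1
          _ ≤ 4 * 9^j * 2 := by
              have := Nat.mul_le_mul_left 4 h
              calc 4 * (4^j * j) * 2 = (4 * (4^j * j)) * 2 := by ring
                _ ≤ (4 * 9^j) * 2 := Nat.mul_le_mul_right _ (Nat.mul_le_mul_left 4 h)
          _ ≤ 9^(j+1) := by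
              have : (4:ℕ) * 2 ≤ 9 := by norm_num
              calc 4 * 9^j * 2 = 9^j * 8 := by ring
                _ ≤ 9^j * 9 := Nat.mul_le_mul_left _ (by norm_num)
                _ = 9^(j+1) := by ring

lemma nine_le (k : ℕ) (hk : 3 ≤ k) : (9:ℕ)^k ≤ k^(2*k) := by
  calc (9:ℕ)^k ≤ (k^2)^k := Nat.pow_le_pow_left (by nlinarith) k
    _ = k^(2*k) := by rw [← Nat.pow_mul, Nat.mul_comm]

/-- Constant for case B: `(4k)^k · k ≤ k^(3k)`. -/
lemma constB (k : ℕ) (hk : 3 ≤ k) : (4*k)^k * k ≤ k^(3*k) := by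
  have h1 : (4*k)^k * k = (4^k * k) * k^k := by
    rw [Nat.mul_pow]; ring
  rw [h1]
  calc (4^k * k) * k^k ≤ 9^k * k^k := Nat.mul_le_mul_right _ (pow49 k hk)
    _ ≤ k^(2*k) * k^k := Nat.mul_le_mul_right _ (nine_le k hk)
    _ = k^(3*k) := by rw [← Nat.pow_add]; ring_nf

/-- Constant for case A: `4^(k-1) · (k-1)² ≤ k^(3k)`. -/
lemma constA (k K : ℕ) (hk : 3 ≤ k) (hK : k = K + 1) : 4^K * K^2 ≤ k^(3*k) := by
  have h1 : 4^K * K^2 ≤ 4^k * k^2 := by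
    apply Nat.mul_le_mul (Nat.pow_le_pow_right (by norm_num) (by omega))
    exact Nat.pow_le_pow_left (by omega) 2
  have h2 : (4:ℕ)^k ≤ k^(2*k) := le_trans (Nat.pow_le_pow_left (by norm_num) k)
    ((nine_le k hk))
  have h3 : 4^k * k^2 ≤ k^(2*k) * k^2 := Nat.mul_le_mul_right _ h2
  have h4 : k^(2*k) * k^2 = k^(2*k+2) := by rw [← Nat.pow_add]
  have h5 : k^(2*k+2) ≤ k^(3*k) := Nat.pow_le_pow_right (by omega) (by omega)
  omega

lemma kbig_ge (k : ℕ) (hk : 3 ≤ k) : 4*k + 2 ≤ k^(3*k) := by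
  have h1 : k^4 ≤ k^(3*k) := Nat.pow_le_pow_right (by omega) (by omega)
  have h2 : 4*k + 2 ≤ k^4 := by
    have h3 : k^4 = k*k*k*k := by ring
    have h4 : k*k*k*k ≥ 3*3*3*k := by
      have := Nat.mul_le_mul (Nat.mul_le_mul (Nat.mul_le_mul hk hk) hk) (le_refl k)
      omega
    omega
  omega

end RainbowAux

namespace RainbowAux
open Finset

section Core
variable {k K κ t q r m n : ℕ}

/-- Case A of the core inequality: `q ≤ r`. -/
lemma caseA (hK : k = K+1) (hκ : K = κ+1) (hk : 3 ≤ k)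
    (hr : 1 ≤ r) (hm : m = q + r) (hn : n = k*m + t)
    (hbig : k^(3*k) * (t+1) ≤ n) (hq : q ≤ r) :
    ∑ i ∈ range (t+1), (k*m - 1 + i).choose K ≤
      ∑ i ∈ range (t+q+1), (k*r - 1 + i).choose K := by
  have hkr : k ≤ k*r := Nat.le_mul_of_pos_right k hr
  have hkbig := kbig_ge k hk
  have hnt : 2*t + 4*k + 2 ≤ n := by
    have : (4*k+2) * (t+1) ≤ k^(3*k) * (t+1) := Nat.mul_le_mul_right _ hkbig
    nlinarith
  have h4kr : n ≤ 4*(k*r - k + 1) := by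
    have h2 : k*m ≤ 2*(k*r) := by
      have : m ≤ 2*r := by omega
      calc k*m ≤ k*(2*r) := Nat.mul_le_mul_left _ this
        _ = 2*(k*r) := by ring
    omega
  -- L2 : (t+1) * K * C(n,κ) ≤ C(kr-1, K)
  have hL2 : (t+1) * K * n.choose κ ≤ (k*r - 1).choose K := by
    have hKfac : K.factorial = K * κ.factorial := by
      rw [hκ]; rw [Nat.factorial_succ]
    have hstep : (t+1) * K^2 * n^κ ≤ (k*r - k + 1)^K := by
      have hA := constA k K hk hK
      have h1 : 4^K * ((t+1) * K^2 * n^κ) ≤ n * n^κ := by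
        have h2 : 4^K * (t+1) * K^2 ≤ n := by
          calc 4^K * (t+1) * K^2 = (4^K * K^2) * (t+1) := by ring
            _ ≤ k^(3*k) * (t+1) := Nat.mul_le_mul_right _ hA
            _ ≤ n := hbig
        calc 4^K * ((t+1) * K^2 * n^κ) = (4^K * (t+1) * K^2) * n^κ := by ring
          _ ≤ n * n^κ := Nat.mul_le_mul_right _ h2
      have h3 : n * n^κ = n^K := by rw [hκ, Nat.pow_succ]; ring
      have h4 : n^K ≤ (4*(k*r - k + 1))^K := Nat.pow_le_pow_left h4kr K
      have h5 : (4*(k*r - k + 1))^K = 4^K * (k*r - k + 1)^K := Nat.mul_pow 4 _ K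
      have h6 : 4^K * ((t+1) * K^2 * n^κ) ≤ 4^K * (k*r - k + 1)^K := by omega
      exact Nat.le_of_mul_le_mul_left h6 (pow_pos (by norm_num) K)
    -- multiply out by K!
    have hfac1 : K.factorial * ((t+1) * K * n.choose κ)
        = (t+1) * K^2 * (κ.factorial * n.choose κ) := by
      rw [hKfac]; ring
    have hfac2 : κ.factorial * n.choose κ = n.descFactorial κ := factorial_mul_choose n κ
    have hfac3 : n.descFactorial κ ≤ n^κ := Nat.descFactorial_le_pow n κ
    have hup : K.factorial * ((t+1) * K * n.choose κ) ≤ (k*r - k + 1)^K := by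
      rw [hfac1, hfac2]
      calc (t+1) * K^2 * n.descFactorial κ ≤ (t+1) * K^2 * n^κ :=
            Nat.mul_le_mul_left _ hfac3
        _ ≤ (k*r - k + 1)^K := hstep
    have hlow : (k*r - k + 1)^K ≤ K.factorial * (k*r - 1).choose K := by
      rw [factorial_mul_choose]
      have : k*r - 1 + 1 - K = k*r - k + 1 := by omega
      calc (k*r - k + 1)^K = (k*r - 1 + 1 - K)^K := by rw [this]
        _ ≤ (k*r - 1).descFactorial K := Nat.pow_sub_le_descFactorial _ K
    exact Nat.le_of_mul_le_mul_left (le_trans hup hlow) (Nat.factorial_pos K)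
  -- main chain
  have hsplit : ∑ i ∈ range (t+q+1), (k*r - 1 + i).choose K
      = (∑ i ∈ range q, (k*r - 1 + i).choose K)
        + ∑ i ∈ range (t+1), (k*r - 1 + (q + i)).choose K := by
    have : t + q + 1 = q + (t+1) := by omega
    rw [this, sum_range_split]
  have hper : ∀ i ∈ range (t+1), (k*m - 1 + i).choose K
      ≤ (k*r - 1 + (q+i)).choose K + q*K * n.choose κ := by
    intro i hi
    rw [Finset.mem_range] at hi
    have hqK : q*K + q = k*q := by rw [hK]; ring
    have hkm : k*m = k*q + k*r := by rw [hm]; ring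
    have harg : k*m - 1 + i = (k*r - 1 + (q+i)) + q*K := by omega
    have hle : (k*r - 1 + (q+i)) + q*K ≤ n := by omega
    rw [harg, hκ]
    exact choose_shift_le n (k*r - 1 + (q+i)) κ (q*(κ+1)) (by rw [hκ] at hle; exact hle)
  calc ∑ i ∈ range (t+1), (k*m - 1 + i).choose K
      ≤ ∑ i ∈ range (t+1), ((k*r - 1 + (q+i)).choose K + q*K * n.choose κ) :=
        Finset.sum_le_sum hper
    _ = (∑ i ∈ range (t+1), (k*r - 1 + (q+i)).choose K) + (t+1) * (q*K*n.choose κ) := by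
        rw [Finset.sum_add_distrib, Finset.sum_const, Finset.card_range, smul_eq_mul]
    _ ≤ (∑ i ∈ range (t+1), (k*r - 1 + (q+i)).choose K) + q * (k*r - 1).choose K := by
        have : (t+1) * (q*K*n.choose κ) = q * ((t+1) * K * n.choose κ) := by ring
        rw [this]
        exact Nat.add_le_add_left (Nat.mul_le_mul_left q hL2) _
    _ ≤ (∑ i ∈ range (t+1), (k*r - 1 + (q+i)).choose K)
        + ∑ i ∈ range q, (k*r - 1 + i).choose K := by
        refine Nat.add_le_add_left ?_ _
        calc q * (k*r - 1).choose K = ∑ _i ∈ range q, (k*r - 1).choose K := by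
              rw [Finset.sum_const, Finset.card_range, smul_eq_mul]
          _ ≤ ∑ i ∈ range q, (k*r - 1 + i).choose K :=
              Finset.sum_le_sum (fun i _ => Nat.choose_le_choose K (by omega))
    _ = ∑ i ∈ range (t+q+1), (k*r - 1 + i).choose K := by rw [hsplit]; ring

end Core
end RainbowAux

namespace RainbowAux
open Finset

section Core2
variable {k K t q r m n : ℕ}

/-- Case B of the core inequality: `r < q`. -/
lemma caseB (hK : k = K+1) (hk : 3 ≤ k)
    (hr : 1 ≤ r) (hm : m = q + r) (hn : n = k*m + t)
    (hbig : k^(3*k) * (t+1) ≤ n) (hq : r < q) :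
    ∑ i ∈ range (t+1), (k*m - 1 + i).choose K ≤
      ∑ i ∈ range (t+q+1), (k*r - 1 + i).choose K := by
  have hkr : k ≤ k*r := Nat.le_mul_of_pos_right k hr
  have hkbig := kbig_ge k hk
  have hnt : 2*t + 4*k + 2 ≤ n := by
    have : (4*k+2) * (t+1) ≤ k^(3*k) * (t+1) := Nat.mul_le_mul_right _ hkbig
    nlinarith
  -- n ≤ 4k(q+1)
  have hn4kq : n ≤ 4*k*(q+1) := by
    have h1 : m ≤ 2*q := by omega
    have h2 : k*m ≤ k*(2*q) := Nat.mul_le_mul_left _ h1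
    have h3 : k*(2*q) = 2*(k*q) := by ring
    have h4 : 4*k*(q+1) = 4*(k*q) + 4*k := by ring
    omega
  -- LHS ≤ (t+1) * C(n,K)
  have hLHS : ∑ i ∈ range (t+1), (k*m - 1 + i).choose K ≤ (t+1) * n.choose K := by
    calc ∑ i ∈ range (t+1), (k*m - 1 + i).choose K
        ≤ ∑ _i ∈ range (t+1), n.choose K :=
          Finset.sum_le_sum (fun i hi => Nat.choose_le_choose K (by
            rw [Finset.mem_range] at hi; omega))
      _ = (t+1) * n.choose K := by rw [Finset.sum_const, Finset.card_range, smul_eq_mul]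
  -- RHS ≥ C(K+(t+q+1), K+1)
  have hRHS : (K + (t+q+1)).choose (K+1) ≤ ∑ i ∈ range (t+q+1), (k*r - 1 + i).choose K := by
    rw [← sum_choose_diag K (t+q+1)]
    exact Finset.sum_le_sum (fun i _ => Nat.choose_le_choose K (by omega))
  -- middle : (t+1) * C(n,K) ≤ C(K+(t+q+1), K+1)
  have hmid : (t+1) * n.choose K ≤ (K + (t+q+1)).choose (K+1) := by
    have hfac1 : (K+1).factorial * ((t+1) * n.choose K)
        = (t+1) * (K+1) * (K.factorial * n.choose K) := by
      rw [Nat.factorial_succ]; ring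
    have hfac2 : K.factorial * n.choose K ≤ n^K := by
      rw [factorial_mul_choose]; exact Nat.descFactorial_le_pow n K
    have hup : (K+1).factorial * ((t+1) * n.choose K) ≤ (t+1) * k * n^K := by
      rw [hfac1, hK]
      calc (t+1) * (K+1) * (K.factorial * n.choose K) ≤ (t+1) * (K+1) * n^K :=
            Nat.mul_le_mul_left _ hfac2
        _ = (t+1) * (K+1) * n^K := rfl
    -- (t+1)*k*n^K ≤ (q+1)^k
    have hq1 : (t+1) * k * n^K ≤ (q+1)^k := by
      have hcB := constB k hk
      have h1 : n^k = n * n^K := by rw [hK, Nat.pow_succ]; ring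
      have h2 : ((4*k)^k * k * (t+1)) * n^K ≤ n * n^K := by
        refine Nat.mul_le_mul_right _ ?_
        calc (4*k)^k * k * (t+1) ≤ k^(3*k) * (t+1) := Nat.mul_le_mul_right _ hcB
          _ ≤ n := hbig
      have h3 : n^k ≤ (4*k*(q+1))^k := Nat.pow_le_pow_left hn4kq k
      have h4 : (4*k*(q+1))^k = (4*k)^k * (q+1)^k := Nat.mul_pow _ _ k
      have h5 : (4*k)^k * (k * (t+1) * n^K) ≤ (4*k)^k * (q+1)^k := by
        have : (4*k)^k * (k * (t+1) * n^K) = ((4*k)^k * k * (t+1)) * n^K := by ring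
        omega
      have h6 := Nat.le_of_mul_le_mul_left h5
        (pow_pos (by omega) k)
      calc (t+1) * k * n^K = k * (t+1) * n^K := by ring
        _ ≤ (q+1)^k := h6
    have hlow : (q+1)^k ≤ (K+1).factorial * (K + (t+q+1)).choose (K+1) := by
      rw [factorial_mul_choose]
      have h7 : K + (t+q+1) + 1 - (K+1) = t+q+1 := by omega
      calc (q+1)^k ≤ (t+q+1)^k := Nat.pow_le_pow_left (by omega) k
        _ = (K + (t+q+1) + 1 - (K+1))^(K+1) := by rw [h7, hK]
        _ ≤ (K + (t+q+1)).descFactorial (K+1) := Nat.pow_sub_le_descFactorial _ _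
    exact Nat.le_of_mul_le_mul_left (le_trans hup (le_trans hq1 hlow))
      (Nat.factorial_pos (K+1))
  omega

/-- The core window inequality. -/
lemma coreIneq (hK : k = K+1) (hk : 3 ≤ k)
    (hr : 1 ≤ r) (hm : m = q + r) (hn : n = k*m + t)
    (hbig : k^(3*k) * (t+1) ≤ n) :
    ∑ i ∈ range (t+1), (k*m - 1 + i).choose K ≤
      ∑ i ∈ range (t+q+1), (k*r - 1 + i).choose K := by
  rcases le_or_gt q r with h | h
  · have hκ : K = (K-1)+1 := by omega
    exact caseA hK hκ hk hr hm hn hbig h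
  · exact caseB hK hk hr hm hn hbig h

/-- The diamond inequality used to refute the stuck state of the greedy process. -/
lemma diamond (hk : 3 ≤ k) (hr : 1 ≤ r) (hm : q + r = m) (hkm : k*m ≤ n)
    (hbig : k^(3*k) * ((n - k*m)+1) ≤ n) :
    n.choose k + (k*r - 1).choose k ≤ (k*m - 1).choose k + (n - q*(k-1)).choose k := by
  set t := n - k*m with ht
  set K := k - 1 with hKdef
  have hK : k = K + 1 := by omega
  have hkm1 : 1 ≤ k*m := by
    have : k ≤ k*m := Nat.le_mul_of_pos_right k (by
      rcases Nat.eq_zero_or_pos m with h | h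
      · subst h; omega
      · exact h)
    omega
  have hmqr : m = q + r := hm.symm
  have hn : n = k*m + t := by omega
  have hq : q ≤ m := by omega
  have hkq : q*(k-1) + q = k*q := by
    have : k - 1 = K := hKdef.symm
    rw [this, hK]; ring
  have harg : n - q*(k-1) = k*r + t + q := by
    have hkm2 : k*m = k*q + k*r := by rw [hmqr]; ring
    omega
  have h1 : n.choose k = (k*m - 1).choose k + ∑ i ∈ range (t+1), (k*m - 1 + i).choose K := by
    have : k*m - 1 + (t+1) = n := by omega
    rw [← this, hK, choose_add_eq]
  have h2 : (k*r + t + q).choose k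
      = (k*r - 1).choose k + ∑ i ∈ range (t+q+1), (k*r - 1 + i).choose K := by
    have hkr : k ≤ k*r := Nat.le_mul_of_pos_right k hr
    have : k*r - 1 + (t+q+1) = k*r + t + q := by omega
    rw [← this, hK, choose_add_eq]
  have h3 := coreIneq hK hk hr hmqr hn hbig
  rw [harg, h1, h2]
  omega

end Core2
end RainbowAux

namespace RainbowAux
open Finset

lemma greedy_main {k n m : ℕ} (hk : 3 ≤ k) (hkm : k*m ≤ n)
    (F : Fin m → Finset (Finset ℕ))
    (hkg : ∀ i, IsKGraphOn n k (F i))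
    (hst : ∀ i, StableGraph n (F i))
    (hdia : ∀ q r, 1 ≤ r → q + r = m →
      Nat.choose n k + Nat.choose (k*r - 1) k ≤ Nat.choose (k*m - 1) k
        + Nat.choose (n - q*(k-1)) k)
    (hcard : ∀ i, Nat.choose (k*m - 1) k < (F i).card) :
    ∀ ℓ, ℓ ≤ n → ∀ S : Finset (Fin m),
      (m - S.card) * (k-1) + k * S.card ≤ ℓ →
      ∃ e : Fin m → Finset ℕ,
        (∀ i ∈ S, e i ∈ F i ∧ e i ⊆ Icc ((m - S.card)*(k-1) + 1) ℓ) ∧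
        (∀ i ∈ S, ∀ j ∈ S, i ≠ j → Disjoint (e i) (e j)) := by
  intro ℓ
  induction ℓ using Nat.strong_induction_on with
  | _ ℓ IH =>
    intro hℓn S hinv
    rcases S.eq_empty_or_nonempty with rfl | hSne
    · exact ⟨fun _ => ∅, by simp, by simp⟩
    obtain ⟨i₀, hi₀⟩ := hSne
    have hr1 : 1 ≤ S.card := Finset.card_pos.mpr ⟨i₀, hi₀⟩
    have hrm : S.card ≤ m := by
      calc S.card ≤ (univ : Finset (Fin m)).card := Finset.card_le_card (Finset.subset_univ S)
        _ = m := Finset.card_fin m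
    set r := S.card with hrdef
    set q := m - r with hqdef
    set a := q*(k-1) + 1 with hadef
    have hkr : k ≤ k*r := Nat.le_mul_of_pos_right k hr1
    have hinv' : q*(k-1) + k*r ≤ ℓ := hinv
    have hak : a + (k-1) ≤ ℓ := by omega
    set J := JSet k a ℓ with hJdef
    have hJsub : J ⊆ Icc a ℓ := JSet_subset_Icc hak
    have hJsub1 : J ⊆ Icc 1 n := by
      intro x hx
      have h1 := hJsub hx
      rw [Finset.mem_Icc] at h1 ⊢
      omega
    by_cases hacc : ∃ i ∈ S, J ∈ F i
    · -- assign J to an accepting family and recurse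
      obtain ⟨i, hiS, hiJ⟩ := hacc
      have hcard' : (S.erase i).card = r - 1 := by
        rw [Finset.card_erase_of_mem hiS]
      have hq' : m - (S.erase i).card = q + 1 := by rw [hcard']; omega
      have hexp : (q+1)*(k-1) = q*(k-1) + (k-1) := by ring
      have hexp2 : k*(r-1) + k = k*r := by
        have h0 : r - 1 + 1 = r := by omega
        calc k*(r-1) + k = k*((r-1)+1) := by ring
          _ = k*r := by rw [h0]
      have hinv2 : (m - (S.erase i).card) * (k-1) + k * (S.erase i).card ≤ ℓ - 1 := by
        rw [hq', hcard']
        omega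
      obtain ⟨e', he'1, he'2⟩ := IH (ℓ-1) (by omega) (by omega) (S.erase i) hinv2
      rw [hq'] at he'1
      refine ⟨fun j => if j = i then J else e' j, ?_, ?_⟩
      · intro j hjS
        by_cases hji : j = i
        · subst hji
          simp only [if_pos rfl]
          refine ⟨hiJ, fun x hx => ?_⟩
          have h1 := hJsub hx
          rw [Finset.mem_Icc] at h1 ⊢
          omega
        · simp only [if_neg hji]
          have hj' : j ∈ S.erase i := Finset.mem_erase.mpr ⟨hji, hjS⟩
          obtain ⟨h1, h2⟩ := he'1 j hj'
          refine ⟨h1, fun x hx => ?_⟩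
          have h3 := h2 hx
          rw [Finset.mem_Icc] at h3 ⊢
          omega
      · have hdJ : ∀ j ∈ S.erase i, Disjoint J (e' j) := by
          intro j hj
          have h2 := (he'1 j hj).2
          rw [Finset.disjoint_left]
          intro x hxJ hxe
          have h3 := h2 hxe
          rw [Finset.mem_Icc] at h3
          rcases mem_JSet.mp hxJ with ⟨i', hi', rfl⟩ | rfl <;> omega
        intro j₁ hj₁ j₂ hj₂ hne
        simp only []
        by_cases h1 : j₁ = i
        · rw [show ((if j₁ = i then J else e' j₁) = J) from if_pos h1,
            show ((if j₂ = i then J else e' j₂) = e' j₂) from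
              if_neg (fun hh : j₂ = i => hne (by rw [h1, hh]))]
          exact hdJ j₂ (Finset.mem_erase.mpr ⟨fun hh => hne (by rw [h1, hh]), hj₂⟩)
        · by_cases h2 : j₂ = i
          · rw [show ((if j₁ = i then J else e' j₁) = e' j₁) from if_neg h1,
              show ((if j₂ = i then J else e' j₂) = J) from if_pos h2]
            exact (hdJ j₁ (Finset.mem_erase.mpr ⟨h1, hj₁⟩)).symm
          · rw [show ((if j₁ = i then J else e' j₁) = e' j₁) from if_neg h1,
              show ((if j₂ = i then J else e' j₂) = e' j₂) from if_neg h2]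
            exact he'2 j₁ (Finset.mem_erase.mpr ⟨h1, hj₁⟩) j₂
              (Finset.mem_erase.mpr ⟨h2, hj₂⟩) hne
    · by_cases hroom : q*(k-1) + k*r + 1 ≤ ℓ
      · -- delete the top vertex and recurse
        obtain ⟨e', he'1, he'2⟩ := IH (ℓ-1) (by omega) (by omega) S
          (by rw [← hrdef, ← hqdef]; omega)
        refine ⟨e', fun j hj => ⟨(he'1 j hj).1, ?_⟩, he'2⟩
        refine (he'1 j hj).2.trans ?_
        exact Finset.Icc_subset_Icc_right (by omega)
      · -- stuck: derive a contradiction by counting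
        exfalso
        have hstuck : ℓ = q*(k-1) + k*r := by omega
        set X := (Finset.powersetCard k (Icc a n)) \ (Finset.powersetCard k (Icc a (ℓ-1)))
          with hX
        have hmono : Finset.powersetCard k (Icc a (ℓ-1)) ⊆ Finset.powersetCard k (Icc a n) :=
          Finset.powersetCard_mono (Finset.Icc_subset_Icc_right (by omega))
        have hXmem : ∀ e ∈ X, DomLE J e ∧ e ∈ Finset.powersetCard k (Icc 1 n) := by
          intro e he
          rw [hX, Finset.mem_sdiff, Finset.mem_powersetCard] at he
          obtain ⟨⟨hsub, hcardk⟩, hnot⟩ := he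
          have hex : ∃ x ∈ e, ℓ ≤ x := by
            by_contra hcon
            push_neg at hcon
            refine hnot (Finset.mem_powersetCard.mpr ⟨?_, hcardk⟩)
            intro x hx
            have h1 := hsub hx
            have h2 := hcon x hx
            rw [Finset.mem_Icc] at h1 ⊢
            omega
          refine ⟨domLE_JSet (by omega) hak hcardk hsub hex, ?_⟩
          refine Finset.mem_powersetCard.mpr ⟨?_, hcardk⟩
          intro x hx
          have h1 := hsub hx
          rw [Finset.mem_Icc] at h1 ⊢
          omega
        have hdisj : Disjoint (F i₀) X := by
          rw [Finset.disjoint_left]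
          intro e he heX
          have h1 := (hXmem e heX).1
          have h2 := hst i₀ J e hJsub1 h1 he
          exact hacc ⟨i₀, hi₀, h2⟩
        have hFsub : F i₀ ⊆ Finset.powersetCard k (Icc 1 n) := by
          intro e he
          obtain ⟨h1, h2⟩ := hkg i₀ e he
          exact Finset.mem_powersetCard.mpr ⟨h1, h2⟩
        have hXsub : X ⊆ Finset.powersetCard k (Icc 1 n) := fun e he => (hXmem e he).2
        have hunion : (F i₀).card + X.card ≤ Nat.choose n k := by
          have h1 : (F i₀ ∪ X).card = (F i₀).card + X.card :=
            Finset.card_union_of_disjoint hdisj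
          have h2 : (F i₀ ∪ X).card ≤ (Finset.powersetCard k (Icc 1 n)).card :=
            Finset.card_le_card (Finset.union_subset hFsub hXsub)
          rw [Finset.card_powersetCard, Nat.card_Icc] at h2
          have h3 : n + 1 - 1 = n := by omega
          rw [h3] at h2
          omega
        have hXcard : X.card + Nat.choose (k*r - 1) k = Nat.choose (n - q*(k-1)) k := by
          have h1 := Finset.card_sdiff_add_card_eq_card hmono
          rw [Finset.card_powersetCard, Finset.card_powersetCard, Nat.card_Icc,
            Nat.card_Icc] at h1
          have h2 : ℓ - 1 + 1 - a = k*r - 1 := by omega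
          have h3 : n + 1 - a = n - q*(k-1) := by omega
          rw [h2, h3] at h1
          exact h1
        have hd := hdia q r hr1 (by omega)
        have hc := hcard i₀
        omega

end RainbowAux

/-- almost perfect rainbow matchings — the case `m > (1-c)n/k`. -/
theorem rainbow_matching_large_m (k : ℕ) (hk : k ≥ 3) :
    ∃ c n₂ : ℝ, 0 < c ∧ 0 < n₂ ∧
      ∀ n m : ℕ, (n : ℝ) ≥ n₂ → n ≥ k * m → 0 < m → (m : ℝ) > (1 - c) * n / k →
        ∀ F : Fin m → Finset (Finset ℕ), (∀ i, IsKGraphOn n k (F i)) →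
          (∀ i, StableGraph n (F i)) →
          (∀ i, (F i).card > Nat.choose (k * m - 1) k) →
          HasRainbowMatching F := by
  have hk0 : (0:ℝ) < (k:ℝ) := by
    have : (0:ℕ) < k := by omega
    exact_mod_cast this
  have hkp : (0:ℝ) < (k:ℝ)^(3*k) := pow_pos hk0 _
  refine ⟨1/(2*(k:ℝ)^(3*k)), (k:ℝ)^(3*k+2), by positivity, by positivity, ?_⟩
  intro n m hn2 hnkm hm0 hmgt F hkgr hstb hcrd
  have hkm : k*m ≤ n := hnkm
  set t := n - k*m with htdef
  have htm : (t:ℝ) = (n:ℝ) - ((k*m : ℕ):ℝ) := by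
    rw [htdef]; exact Nat.cast_sub hkm
  have h1 : (1 - 1/(2*(k:ℝ)^(3*k)))*n < m*k := by
    rw [gt_iff_lt, div_lt_iff₀ hk0] at hmgt
    exact hmgt
  have h3 : (t:ℝ) < (1/(2*(k:ℝ)^(3*k)))*n := by
    rw [htm]
    push_cast
    nlinarith
  have h4 : ((2*k^(3*k)*t : ℕ):ℝ) < (n:ℝ) := by
    push_cast
    have h5 : (0:ℝ) < 2*(k:ℝ)^(3*k) := by positivity
    have h6 := (mul_lt_mul_iff_right₀ h5).mpr h3
    have h7 : 2*(k:ℝ)^(3*k) * ((1/(2*(k:ℝ)^(3*k)))*n) = n := by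
      field_simp
    rw [h7] at h6
    nlinarith
  have h5 : 2*k^(3*k)*t < n := by exact_mod_cast h4
  have h6 : k^(3*k+2) ≤ n := by
    have : ((k^(3*k+2) : ℕ):ℝ) ≤ (n:ℝ) := by push_cast; exact hn2
    exact_mod_cast this
  have h7 : 2*k^(3*k) ≤ k^(3*k+2) := by
    have e1 : k^(3*k+2) = k^(3*k)*k^2 := by rw [pow_add]
    have e2 : 2 ≤ k^2 := by nlinarith
    calc 2*k^(3*k) = k^(3*k)*2 := by ring
      _ ≤ k^(3*k)*k^2 := Nat.mul_le_mul_left _ e2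
      _ = k^(3*k+2) := e1.symm
  have hbig : k^(3*k)*(t+1) ≤ n := by
    have e1 : k^(3*k)*(t+1) = k^(3*k)*t + k^(3*k) := by ring
    have e2 : 2*k^(3*k)*t = 2*(k^(3*k)*t) := by ring
    omega
  have hbig' : k^(3*k) * ((n - k*m)+1) ≤ n := by rw [← htdef]; exact hbig
  have hdia : ∀ q r, 1 ≤ r → q + r = m →
      Nat.choose n k + Nat.choose (k*r - 1) k ≤ Nat.choose (k*m - 1) k
        + Nat.choose (n - q*(k-1)) k :=
    fun q r h1 h2 => RainbowAux.diamond hk h1 h2 hkm hbig'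
  have hinv : (m - (Finset.univ : Finset (Fin m)).card) * (k-1)
      + k * (Finset.univ : Finset (Fin m)).card ≤ n := by
    rw [Finset.card_fin]
    have : m - m = 0 := by omega
    rw [this]
    omega
  obtain ⟨e, he1, he2⟩ := RainbowAux.greedy_main hk hkm F hkgr hstb hdia
    (fun i => hcrd i) n le_rfl Finset.univ hinv
  exact ⟨e, fun i => (he1 i (Finset.mem_univ i)).1,
    fun i j hij => he2 i (Finset.mem_univ i) j (Finset.mem_univ j) hij⟩
end

section
/- For every integer k ≥ 3 there exists c'₀ ∈ (0,1) such that for every real c' with 0 < c' < c'₀ there exist c > 0 and n₀ such that the following holds for all integers n ≥ n₀ and m with (1−c)n/k < m ≤ n/k: every stable k-graph F on vertex set [n] with |F| > C(km−1, k) contains a complete k-subgraph on more than (1−c')km vertices; that is, there exists a set W ⊆ [n] with |W| > (1−c')km such that every k-subset of W is an edge of F. -/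
open Finset

section Aux

set_option maxHeartbeats 1000000

private lemma sorted_gap {l : List ℕ} (hl : l.Pairwise (· < ·)) :
    ∀ (i j : ℕ) (hi : i < l.length) (hj : j < l.length), i ≤ j →
      l.get ⟨i, hi⟩ + (j - i) ≤ l.get ⟨j, hj⟩ := by
  intro i j
  induction j with
  | zero =>
    intro hi hj hij
    have : i = 0 := by omega
    subst this; simp
  | succ j ih =>
    intro hi hj hij
    rcases Nat.eq_or_lt_of_le hij with h | h
    · subst h; simp
    · have hij' : i ≤ j := by omega
      have hj' : j < l.length := by omega
      have h1 := ih hi hj' hij'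
      have h2 : l.get ⟨j, hj'⟩ < l.get ⟨j + 1, hj⟩ :=
        hl.rel_get_of_lt (by simp [Fin.lt_def])
      omega

private lemma sort_lb {s : Finset ℕ} {a : ℕ} (hs : ∀ x ∈ s, a ≤ x)
    (i : ℕ) (h : i < (s.sort (· ≤ ·)).length) :
    a + i ≤ (s.sort (· ≤ ·)).get ⟨i, h⟩ := by
  have h0 : 0 < (s.sort (· ≤ ·)).length := by omega
  have hg := sorted_gap (Finset.sortedLT_sort s).pairwise 0 i h0 h (Nat.zero_le i)
  have hm : (s.sort (· ≤ ·)).get ⟨0, h0⟩ ∈ s :=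
    (Finset.mem_sort _).1 (List.get_mem _ _)
  have := hs _ hm
  omega

private lemma sort_ub {s : Finset ℕ} {b kk : ℕ} (hc : s.card = kk) (hs : ∀ x ∈ s, x ≤ b)
    (i : ℕ) (h : i < (s.sort (· ≤ ·)).length) :
    (s.sort (· ≤ ·)).get ⟨i, h⟩ + (kk - 1 - i) ≤ b := by
  have hlen : (s.sort (· ≤ ·)).length = kk := by rw [Finset.length_sort, hc]
  have hlast : kk - 1 < (s.sort (· ≤ ·)).length := by omega
  have hg := sorted_gap (Finset.sortedLT_sort s).pairwise i (kk - 1) h hlast (by omega)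
  have hm : (s.sort (· ≤ ·)).get ⟨kk - 1, hlast⟩ ∈ s :=
    (Finset.mem_sort _).1 (List.get_mem _ _)
  have := hs _ hm
  omega

private lemma domLE_to_top {e : Finset ℕ} {w kk : ℕ} (hk : 1 ≤ kk) (hkw : kk ≤ w)
    (he : e ⊆ Finset.Icc 1 w) (hec : e.card = kk) :
    DomLE e (Finset.Icc (w - kk + 1) w) := by
  have hTc : (Finset.Icc (w - kk + 1) w).card = kk := by rw [Nat.card_Icc]; omega
  rw [DomLE, List.forall₂_iff_get]
  refine ⟨by simp [Finset.length_sort, hec, hTc], ?_⟩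
  intro i h₁ h₂
  have hi : i < kk := by
    have := Finset.length_sort (α := ℕ) (· ≤ ·) (s := e); omega
  have hub := sort_ub (b := w) (kk := kk) hec (fun x hx => (Finset.mem_Icc.1 (he hx)).2) i h₁
  have hlb := sort_lb (a := w - kk + 1) (s := Finset.Icc (w - kk + 1) w)
    (fun x hx => (Finset.mem_Icc.1 hx).1) i h₂
  omega

private lemma domLE_from_bottom {f : Finset ℕ} {a n kk : ℕ} (hk : 1 ≤ kk)
    (hf : f ⊆ Finset.Icc a n) (hfc : f.card = kk) :
    DomLE (Finset.Icc a (a + kk - 1)) f := by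
  have hTc : (Finset.Icc a (a + kk - 1)).card = kk := by rw [Nat.card_Icc]; omega
  rw [DomLE, List.forall₂_iff_get]
  refine ⟨by simp [Finset.length_sort, hfc, hTc], ?_⟩
  intro i h₁ h₂
  have hi : i < kk := by
    have := Finset.length_sort (α := ℕ) (· ≤ ·) (s := Finset.Icc a (a + kk - 1)); omega
  have hub := sort_ub (b := a + kk - 1) (kk := kk) hTc
    (fun x hx => (Finset.mem_Icc.1 hx).2) i h₁
  have hlb := sort_lb (a := a) (s := f) (fun x hx => (Finset.mem_Icc.1 (hf hx)).1) i h₂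
  omega

private lemma choose_add_bound (j : ℕ) : ∀ (d n : ℕ),
    (n + d).choose (j + 1) ≤ n.choose (j + 1) + d * (n + d).choose j := by
  intro d
  induction d with
  | zero => intro n; simp
  | succ d ih =>
    intro n
    have h1 : (n + (d + 1)).choose (j + 1) = (n + d).choose j + (n + d).choose (j + 1) := by
      have h : n + (d + 1) = (n + d) + 1 := by omega
      rw [h, Nat.choose_succ_succ]
    have h2 := ih n
    have h3 : (n + d).choose j ≤ (n + (d + 1)).choose j := Nat.choose_le_choose _ (by omega)
    have h4 : d * (n + d).choose j ≤ d * (n + (d + 1)).choose j := Nat.mul_le_mul_left _ h3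
    calc (n + (d + 1)).choose (j + 1) = (n + d).choose j + (n + d).choose (j + 1) := h1
      _ ≤ n.choose (j + 1) + (d + 1) * (n + (d + 1)).choose j := by
          rw [Nat.add_mul, Nat.one_mul]; omega

end Aux

set_option maxHeartbeats 4000000 in
/-- a large stable `k`-graph contains a large complete `k`-subgraph. -/
theorem stable_contains_large_clique (k : ℕ) (hk : k ≥ 3) :
    ∃ c'₀ : ℝ, 0 < c'₀ ∧ c'₀ < 1 ∧ ∀ c' : ℝ, 0 < c' → c' < c'₀ →
      ∃ c : ℝ, 0 < c ∧ ∃ n₀ : ℕ, ∀ n : ℕ, n ≥ n₀ → ∀ m : ℕ, 0 < m →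
        (1 - c) * n / k < (m : ℝ) → k * m ≤ n →
        ∀ F : Finset (Finset ℕ), IsKGraphOn n k F → StableGraph n F →
          F.card > Nat.choose (k * m - 1) k →
          ∃ W ⊆ Finset.Icc 1 n, (1 - c') * ((k : ℝ) * m) < (W.card : ℝ) ∧
            ∀ e ⊆ W, e.card = k → e ∈ F := by
  refine ⟨1/2, by norm_num, by norm_num, ?_⟩
  intro c' hc'0 hc'2
  have hk0 : 0 < k := by omega
  have hkR : (0 : ℝ) < (k : ℝ) := by exact_mod_cast hk0
  set c : ℝ := c' ^ k / (2 ^ (2 * k + 1) * (k : ℝ) ^ k) with hc_def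
  have hden_pos : (0 : ℝ) < 2 ^ (2 * k + 1) * (k : ℝ) ^ k :=
    mul_pos (pow_pos two_pos _) (pow_pos hkR _)
  have hc0 : 0 < c := div_pos (pow_pos hc'0 _) hden_pos
  have hc'k1 : c' ^ k ≤ 1 := pow_le_one₀ hc'0.le (by linarith)
  have hden2 : (2 : ℝ) ≤ 2 ^ (2 * k + 1) * (k : ℝ) ^ k := by
    have h1 : (2 : ℝ) ≤ 2 ^ (2 * k + 1) := le_self_pow₀ (by norm_num) (by omega)
    have h2 : (1 : ℝ) ≤ (k : ℝ) ^ k := one_le_pow₀ (by exact_mod_cast hk0)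
    nlinarith
  have hc_half : c ≤ 1 / 2 := by
    rw [hc_def, div_le_iff₀ hden_pos]
    nlinarith
  refine ⟨c, hc0, ⟨⌈1 / c⌉₊ + 4 * k + 4, ?_⟩⟩
  intro n hn m hm hml hmu F hKG hstab hFcard
  -- basic real facts
  have hcn1 : 1 ≤ c * n := by
    have h1 : (1 / c : ℝ) ≤ (⌈1 / c⌉₊ : ℝ) := Nat.le_ceil _
    have h2 : ((⌈1 / c⌉₊ : ℕ) : ℝ) ≤ (n : ℝ) := by
      have h3 : ⌈1 / c⌉₊ ≤ n := by omega
      exact_mod_cast h3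
    rw [div_le_iff₀ hc0] at h1
    nlinarith
  have hn44 : 4 * k + 4 ≤ n := by omega
  have hnR : (0 : ℝ) ≤ (n : ℝ) := Nat.cast_nonneg n
  have hkmR : (1 - c) * (n : ℝ) < (k : ℝ) * (m : ℝ) := by
    rw [div_lt_iff₀ hkR] at hml
    nlinarith
  have hKMcast : ((k * m : ℕ) : ℝ) = (k : ℝ) * (m : ℝ) := by push_cast; ring
  have hhalf : (n : ℝ) / 2 ≤ ((k * m : ℕ) : ℝ) := by
    rw [hKMcast]; nlinarith
  have hkmn : k * m ≤ n := hmu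
  have hkmnR : ((k * m : ℕ) : ℝ) ≤ (n : ℝ) := by exact_mod_cast hkmn
  -- the cut parameter
  set t : ℕ := ⌈c' * ((k * m : ℕ) : ℝ)⌉₊ with ht_def
  have hKMpos : (0 : ℝ) < ((k * m : ℕ) : ℝ) := by
    have : 0 < k * m := by positivity
    exact_mod_cast this
  have ht_lb : c' * ((k * m : ℕ) : ℝ) ≤ (t : ℝ) := Nat.le_ceil _
  have ht_ub : (t : ℝ) < c' * ((k * m : ℕ) : ℝ) + 1 :=
    Nat.ceil_lt_add_one (by positivity)
  have ht1 : 1 ≤ t := Nat.one_le_iff_ne_zero.2 (by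
    have : 0 < t := Nat.ceil_pos.2 (by positivity)
    omega)
  have htk : t + k ≤ k * m := by
    have hn4R : (4 : ℝ) * k + 4 ≤ (n : ℝ) := by exact_mod_cast hn44
    have hr : ((t + k : ℕ) : ℝ) < ((k * m : ℕ) : ℝ) + 1 := by
      push_cast
      nlinarith [mul_le_mul_of_nonneg_right hc'2.le hKMpos.le]
    have : t + k < k * m + 1 := by exact_mod_cast hr
    omega
  -- the clique width
  set w : ℕ := k * m + 1 - t with hw_def
  have hwk : k ≤ w := by omega
  have hwn : w ≤ n := by omega
  -- the top interval
  have hT : Finset.Icc (w - k + 1) w ∈ F := by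
    by_contra hTF
    set A := (Finset.Icc 1 n).powersetCard k with hA_def
    set B := (Finset.Icc (w - k + 1) n).powersetCard k with hB_def
    have hBA : B ⊆ A := Finset.powersetCard_mono (Finset.Icc_subset_Icc (by omega) le_rfl)
    have hFA : F ⊆ A \ B := by
      intro e heF
      obtain ⟨hsub, hcard⟩ := hKG e heF
      rw [Finset.mem_sdiff]
      refine ⟨Finset.mem_powersetCard.2 ⟨hsub, hcard⟩, ?_⟩
      intro heB
      obtain ⟨hsub', hcard'⟩ := Finset.mem_powersetCard.1 heB
      have hdom : DomLE (Finset.Icc (w - k + 1) ((w - k + 1) + k - 1)) e :=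
        domLE_from_bottom (by omega) hsub' hcard'
      rw [show (w - k + 1) + k - 1 = w from by omega] at hdom
      exact hTF (hstab _ _ (Finset.Icc_subset_Icc (by omega) hwn) hdom heF)
    have hA : A.card = n.choose k := by
      rw [hA_def, Finset.card_powersetCard, Nat.card_Icc,
        show n + 1 - 1 = n from by omega]
    have hB : B.card = (n + k - w).choose k := by
      rw [hB_def, Finset.card_powersetCard, Nat.card_Icc,
        show n + 1 - (w - k + 1) = n + k - w from by omega]
    have hFle : F.card ≤ n.choose k - (n + k - w).choose k := by
      have h1 := Finset.card_le_card hFA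
      rwa [Finset.card_sdiff_of_subset hBA, hA, hB] at h1
    -- lower bound on C(n+k-w, k) in terms of t
    have hM : t + k - 1 ≤ n + k - w := by omega
    have h6 : t ^ k ≤ k ^ k * ((n + k - w).choose k) := by
      calc t ^ k = (t + k - 1 + 1 - k) ^ k := by
            rw [show t + k - 1 + 1 - k = t from by omega]
        _ ≤ (t + k - 1).descFactorial k := Nat.pow_sub_le_descFactorial _ k
        _ = Nat.factorial k * (t + k - 1).choose k := Nat.descFactorial_eq_factorial_mul_choose _ _
        _ ≤ k ^ k * ((n + k - w).choose k) :=
            Nat.mul_le_mul (Nat.factorial_le_pow k) (Nat.choose_le_choose _ hM)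
    -- upper bound on (n - (km-1)) * C(n, k-1) * k^k via reals
    have hstar : (n - (k * m - 1)) * n.choose (k - 1) * k ^ k ≤ t ^ k := by
      have e0 : ((n - (k * m - 1) : ℕ) : ℝ) = (n : ℝ) + 1 - ((k * m : ℕ) : ℝ) := by
        rw [show n - (k * m - 1) = n + 1 - k * m from by omega,
          Nat.cast_sub (by omega)]
        push_cast; ring
      have r1 : ((n - (k * m - 1) : ℕ) : ℝ) ≤ 2 * c * n := by
        rw [e0, hKMcast]; nlinarith
      have r2 : ((n.choose (k - 1) : ℕ) : ℝ) ≤ (n : ℝ) ^ (k - 1) := by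
        exact_mod_cast Nat.choose_le_pow n (k - 1)
      have r3 : ((n - (k * m - 1)) * n.choose (k - 1) * k ^ k : ℕ) ≤
          ((t : ℕ) ^ k : ℕ) := by
        have rr : (((n - (k * m - 1)) * n.choose (k - 1) * k ^ k : ℕ) : ℝ) ≤
            ((t : ℝ)) ^ k := by
          push_cast
          calc ((n - (k * m - 1) : ℕ) : ℝ) * (n.choose (k - 1) : ℝ) * (k : ℝ) ^ k
              ≤ (2 * c * n) * ((n : ℝ) ^ (k - 1)) * (k : ℝ) ^ k := by
                have hp1 : (0:ℝ) ≤ ((n - (k * m - 1) : ℕ) : ℝ) := Nat.cast_nonneg _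
                have hp2 : (0:ℝ) ≤ (n : ℝ) ^ (k - 1) := by positivity
                have hp3 : (0:ℝ) ≤ (k : ℝ) ^ k := by positivity
                have := mul_le_mul r1 r2 (Nat.cast_nonneg _) (by nlinarith)
                nlinarith
            _ = (c' * n / 4) ^ k := by
                have hnk : (n : ℝ) * (n : ℝ) ^ (k - 1) = (n : ℝ) ^ k := by
                  rw [← pow_succ']; congr 1; omega
                have h4k : (4 : ℝ) ^ k = 2 ^ (2 * k) := by
                  rw [show (4 : ℝ) = 2 ^ 2 from by norm_num, ← pow_mul]
                rw [hc_def, div_pow, mul_pow, h4k, pow_succ]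
                field_simp
                ring_nf
                rw [← hnk]
            _ ≤ (t : ℝ) ^ k := by
                apply pow_le_pow_left₀ (by positivity)
                nlinarith [mul_le_mul_of_nonneg_left hhalf hc'0.le]
        exact_mod_cast rr
      exact_mod_cast r3
    -- key counting inequality
    have h7 := choose_add_bound (k - 1) (n - (k * m - 1)) (k * m - 1)
    rw [show k * m - 1 + (n - (k * m - 1)) = n from by omega,
      show k - 1 + 1 = k from by omega] at h7
    have h8 : (n - (k * m - 1)) * n.choose (k - 1) ≤ (n + k - w).choose k := by
      have hkkpos : 0 < k ^ k := by positivity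
      have := hstar.trans h6
      calc (n - (k * m - 1)) * n.choose (k - 1)
          = ((n - (k * m - 1)) * n.choose (k - 1) * k ^ k) / k ^ k := by
            rw [Nat.mul_div_cancel _ hkkpos]
        _ ≤ (k ^ k * ((n + k - w).choose k)) / k ^ k := Nat.div_le_div_right this
        _ = (n + k - w).choose k := by rw [Nat.mul_div_cancel_left _ hkkpos]
    have hkey : n.choose k ≤ (k * m - 1).choose k + (n + k - w).choose k :=
      h7.trans (Nat.add_le_add_left h8 _)
    omega
  -- conclude with the clique W = [1, w]
  refine ⟨Finset.Icc 1 w, Finset.Icc_subset_Icc_right hwn, ?_, ?_⟩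
  · have hcardW : (Finset.Icc 1 w).card = w := by
      rw [Nat.card_Icc]; omega
    rw [hcardW]
    have hwcast : (w : ℝ) = ((k * m : ℕ) : ℝ) + 1 - (t : ℝ) := by
      rw [hw_def, Nat.cast_sub (by omega)]
      push_cast; ring
    rw [← hKMcast]
    nlinarith [hwcast, ht_ub]
  · intro e he hek
    have hesub : e ⊆ Finset.Icc 1 n := he.trans (Finset.Icc_subset_Icc_right hwn)
    have hdom : DomLE e (Finset.Icc (w - k + 1) w) :=
      domLE_to_top (by omega) hwk he hek
    exact hstab e _ hesub hdom hT
end
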